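/- arXiv:0909.3704 — 6 statements merged into one kernel-verified Lean document; each statement's English description precedes it below -/
import Mathlib

section
/- If p is a random variable on [0,1] whose distribution is stochastically smaller than U[0,1], then E[-log(1-p)] ≤ 1, where -log(1-p) may take the value +∞. -/
open MeasureTheory Set
open scoped ENNReal

/-! Since `-log (1 - p) > t` exactly when `p > 1 - e^{-t}`, stochastic dominance by `U[0,1]` bounds
the tail `P(-log (1 - p) > t)` by `e^{-t}`, and the layer-cake formula gives
`E[-log (1 - p)] ≤ ∫₀^∞ e^{-t} dt = 1`. The event `p = 1`, where the integrand is `∞`,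
is null, having probability at most `ε` for every `ε > 0`. -/

theorem lintegral_Ioi_ofReal_exp_neg :
    ∫⁻ t in Ioi (0 : ℝ), ENNReal.ofReal (Real.exp (-t)) = 1 := by
  have hint : IntegrableOn (fun t : ℝ => Real.exp (-t)) (Ioi 0) := by
    simpa using exp_neg_integrableOn_Ioi 0 zero_lt_one
  rw [← ofReal_integral_eq_lintegral_ofReal hint (ae_of_all _ fun t => (Real.exp_pos _).le),
    integral_exp_neg_Ioi_zero, ENNReal.ofReal_one]

theorem Real.lt_of_lt_neg_log_one_sub {t y : ℝ} (h : t < -Real.log (1 - y)) :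
    1 - Real.exp (-t) < y := by
  by_contra! hy
  have hpos : 0 < 1 - y := by linarith [Real.exp_pos (-t)]
  have : -t ≤ Real.log (1 - y) := (Real.le_log_iff_exp_le hpos).mpr (by linarith)
  linarith

section StochasticallySmaller

variable {Ω : Type*} [MeasurableSpace Ω] {μ : Measure Ω} [IsProbabilityMeasure μ] {p : Ω → ℝ}

theorem measure_lt_le_ofReal_one_sub (hp : Measurable p) {x : ℝ} (hx : 0 ≤ x)
    (h : ENNReal.ofReal x ≤ μ {ω | p ω ≤ x}) :
    μ {ω | x < p ω} ≤ ENNReal.ofReal (1 - x) := by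
  have hcompl : {ω | x < p ω} = {ω | p ω ≤ x}ᶜ := by ext; simp
  rw [hcompl, prob_compl_eq_one_sub (measurableSet_le hp measurable_const), ENNReal.ofReal_sub _ hx,
    ENNReal.ofReal_one]
  exact tsub_le_tsub_left h 1

variable (hp : Measurable p)
  (hstoch : ∀ x ∈ Icc (0 : ℝ) 1, ENNReal.ofReal x ≤ μ {ω | p ω ≤ x})
include hp hstoch

theorem measure_eq_one_eq_zero_of_stochasticallySmaller : μ {ω | p ω = 1} = 0 := by
  refine nonpos_iff_eq_zero.mp (ENNReal.le_of_forall_pos_le_add fun ε hε _ => ?_)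
  rw [zero_add]
  rcases le_or_gt (ε : ℝ) 1 with hε1 | hε1
  · have hsub : {ω | p ω = 1} ⊆ {ω | 1 - (ε : ℝ) < p ω} := fun ω (hω : p ω = 1) => by
      simp [hω, hε]
    calc μ {ω | p ω = 1} ≤ μ {ω | 1 - (ε : ℝ) < p ω} := measure_mono hsub
      _ ≤ ENNReal.ofReal (1 - (1 - ε)) :=
        measure_lt_le_ofReal_one_sub hp (by linarith) (hstoch _ ⟨by linarith, by simp⟩)
      _ = ε := by simp
  · exact prob_le_one.trans (by exact_mod_cast hε1.le)

theorem lintegral_ofReal_neg_log_one_sub_le_one_of_stochasticallySmaller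
    (hrange : ∀ ω, p ω ∈ Icc (0 : ℝ) 1) :
    ∫⁻ ω, ENNReal.ofReal (-Real.log (1 - p ω)) ∂μ ≤ 1 := by
  have hnonneg : 0 ≤ᵐ[μ] fun ω => -Real.log (1 - p ω) := ae_of_all _ fun ω =>
    neg_nonneg.mpr (Real.log_nonpos (by linarith [(hrange ω).2]) (by linarith [(hrange ω).1]))
  have hmeas : AEMeasurable (fun ω => -Real.log (1 - p ω)) μ :=
    (Real.measurable_log.comp (measurable_const.sub hp)).neg.aemeasurable
  have htail : ∀ t ∈ Ioi (0 : ℝ),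
      μ {ω | t < -Real.log (1 - p ω)} ≤ ENNReal.ofReal (Real.exp (-t)) := fun t ht => by
    have hexp : Real.exp (-t) ≤ 1 := Real.exp_le_one_iff.mpr (by linarith [mem_Ioi.mp ht])
    calc μ {ω | t < -Real.log (1 - p ω)} ≤ μ {ω | 1 - Real.exp (-t) < p ω} :=
          measure_mono fun ω => Real.lt_of_lt_neg_log_one_sub
      _ ≤ ENNReal.ofReal (1 - (1 - Real.exp (-t))) :=
          measure_lt_le_ofReal_one_sub hp (by linarith)
            (hstoch _ ⟨by linarith, by linarith [Real.exp_pos (-t)]⟩)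
      _ = ENNReal.ofReal (Real.exp (-t)) := by rw [sub_sub_cancel]
  calc ∫⁻ ω, ENNReal.ofReal (-Real.log (1 - p ω)) ∂μ
      = ∫⁻ t in Ioi 0, μ {ω | t < -Real.log (1 - p ω)} :=
        lintegral_eq_lintegral_meas_lt μ hnonneg hmeas
    _ ≤ ∫⁻ t in Ioi 0, ENNReal.ofReal (Real.exp (-t)) := setLIntegral_mono' measurableSet_Ioi htail
    _ = 1 := lintegral_Ioi_ofReal_exp_neg

end StochasticallySmaller

/-- If `p` is a random variable with values in `[0,1]` whose distribution is
stochastically smaller than `U[0,1]`, then `E[-log(1-p)] ≤ 1`, where the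
(nonnegative) random variable `-log(1-p)` is interpreted as `+∞` when `p = 1`. -/
theorem expectation_neg_log_one_sub_le_one_of_stochastically_smaller
    {Ω : Type*} [MeasurableSpace Ω]
    (μ : Measure Ω) [IsProbabilityMeasure μ]
    (p : Ω → ℝ) (hmeas : Measurable p) (hrange : ∀ ω, p ω ∈ Set.Icc (0:ℝ) 1)
    (hstoch : ∀ x ∈ Set.Icc (0:ℝ) 1, ENNReal.ofReal x ≤ μ {ω | p ω ≤ x}) :
    ∫⁻ ω, (if p ω = 1 then (⊤ : ℝ≥0∞) else ENNReal.ofReal (-Real.log (1 - p ω))) ∂μ ≤ 1 := by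
  have hae : (fun ω => if p ω = 1 then ∞ else ENNReal.ofReal (-Real.log (1 - p ω)))
      =ᵐ[μ] fun ω => ENNReal.ofReal (-Real.log (1 - p ω)) := by
    filter_upwards [measure_eq_zero_iff_ae_notMem.mp
      (measure_eq_one_eq_zero_of_stochasticallySmaller hmeas hstoch)] with ω hω
    exact if_neg hω
  rw [lintegral_congr_ae hae]
  exact lintegral_ofReal_neg_log_one_sub_le_one_of_stochasticallySmaller hmeas hstoch hrange
end

section
/- Let p_1, ..., p_{m_0} be i.i.d. U[0,1] and p_{m_0+1}, ..., p_m independent random variables on [0,1] each stochastically smaller than U[0,1]. Then the estimator m̃_0' = -Σ_{i=1}^m log(1-p_i) satisfies m_0 ≤ E[m̃_0'] ≤ m. -/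
/-!
By the layer-cake formula, `E[-log (1 - q)] = ∫_{t > 0} P(q > 1 - e^{-t}) dt`. For a uniform `q` the
integrand is exactly `e^{-t}`, and for `q` stochastically smaller than uniform it is at most `e^{-t}`;
since `∫_{t > 0} e^{-t} dt = 1`, each null term has expectation `1` and each other term expectation in
`[0, 1]`; linearity of expectation finishes.
-/

open scoped ENNReal
open MeasureTheory ProbabilityTheory Set Real

lemma neg_log_one_sub_nonneg {x : ℝ} (hx : x ∈ Icc (0 : ℝ) 1) : 0 ≤ -log (1 - x) :=
  neg_nonneg.mpr (log_nonpos (by linarith [hx.2]) (by linarith [hx.1]))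

/-- At `x = 1` the left side reads `t < -log 0 = 0`, hence the open upper end on the right. -/
lemma lt_neg_log_one_sub_iff {t x : ℝ} (ht : 0 < t) (hx : x ∈ Icc (0 : ℝ) 1) :
    t < -log (1 - x) ↔ x ∈ Ioo (1 - exp (-t)) 1 := by
  rcases hx.2.eq_or_lt with rfl | hx1
  · simp [ht.not_gt]
  · rw [lt_neg, log_lt_iff_lt_exp (by linarith)]
    exact ⟨fun h => ⟨by linarith, hx1⟩, fun h => by linarith [h.1]⟩

lemma one_sub_exp_neg_mem_Icc {t : ℝ} (ht : 0 ≤ t) : 1 - exp (-t) ∈ Icc (0 : ℝ) 1 :=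
  ⟨by linarith [exp_le_one_iff.mpr (neg_nonpos.mpr ht)], by linarith [exp_pos (-t)]⟩

lemma lintegral_exp_neg_Ioi_zero : ∫⁻ t in Ioi (0 : ℝ), ENNReal.ofReal (exp (-t)) = 1 := by
  rw [← ofReal_integral_eq_lintegral_ofReal (integrableOn_exp_neg_Ioi 0)
    (ae_of_all _ fun t => (exp_pos _).le), integral_exp_neg_Ioi_zero, ENNReal.ofReal_one]

section NegLogOneSub

variable {Ω : Type*} [MeasurableSpace Ω] {ν : Measure Ω} {q : Ω → ℝ}

lemma measurable_neg_log_one_sub (hq : Measurable q) : Measurable fun ω => -log (1 - q ω) :=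
  (measurable_log.comp (measurable_const.sub hq)).neg

lemma lintegral_neg_log_one_sub_eq_lintegral_tail (hq : Measurable q)
    (hr : ∀ ω, q ω ∈ Icc (0 : ℝ) 1) :
    ∫⁻ ω, ENNReal.ofReal (-log (1 - q ω)) ∂ν
      = ∫⁻ t in Ioi (0 : ℝ), ν {ω | q ω ∈ Ioo (1 - exp (-t)) 1} := by
  rw [lintegral_eq_lintegral_meas_lt ν (ae_of_all _ fun ω => neg_log_one_sub_nonneg (hr ω))
    (measurable_neg_log_one_sub hq).aemeasurable]
  refine setLIntegral_congr_fun measurableSet_Ioi fun t ht => ?_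
  simp only [lt_neg_log_one_sub_iff ht (hr _)]

lemma lintegral_neg_log_one_sub_le_one (hq : Measurable q) (hr : ∀ ω, q ω ∈ Icc (0 : ℝ) 1)
    (htail : ∀ a ∈ Icc (0 : ℝ) 1, ν {ω | q ω ∈ Ioo a 1} ≤ ENNReal.ofReal (1 - a)) :
    ∫⁻ ω, ENNReal.ofReal (-log (1 - q ω)) ∂ν ≤ 1 := by
  rw [lintegral_neg_log_one_sub_eq_lintegral_tail hq hr, ← lintegral_exp_neg_Ioi_zero]
  refine setLIntegral_mono (by fun_prop) fun t ht => ?_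
  simpa using htail _ (one_sub_exp_neg_mem_Icc (le_of_lt ht))

lemma lintegral_neg_log_one_sub_eq_one (hq : Measurable q) (hr : ∀ ω, q ω ∈ Icc (0 : ℝ) 1)
    (htail : ∀ a ∈ Icc (0 : ℝ) 1, ν {ω | q ω ∈ Ioo a 1} = ENNReal.ofReal (1 - a)) :
    ∫⁻ ω, ENNReal.ofReal (-log (1 - q ω)) ∂ν = 1 := by
  rw [lintegral_neg_log_one_sub_eq_lintegral_tail hq hr, ← lintegral_exp_neg_Ioi_zero]
  refine setLIntegral_congr_fun measurableSet_Ioi fun t ht => ?_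
  simpa using htail _ (one_sub_exp_neg_mem_Icc (le_of_lt ht))

lemma measure_mem_Ioo_one_of_map_eq_uniform (hq : Measurable q)
    (hmap : ν.map q = volume.restrict (Icc (0 : ℝ) 1)) {a : ℝ} (ha : 0 ≤ a) :
    ν {ω | q ω ∈ Ioo a 1} = ENNReal.ofReal (1 - a) := by
  change ν (q ⁻¹' Ioo a 1) = _
  rw [← Measure.map_apply hq measurableSet_Ioo, hmap,
    Measure.restrict_apply measurableSet_Ioo,
    inter_eq_self_of_subset_left (Ioo_subset_Icc_self.trans (Icc_subset_Icc_left ha)),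
    volume_Ioo]

lemma measure_mem_Ioo_one_le [IsProbabilityMeasure ν] (hq : Measurable q)
    (hdom : ∀ x ∈ Icc (0 : ℝ) 1, ENNReal.ofReal x ≤ ν {ω | q ω ≤ x}) {a : ℝ}
    (ha : a ∈ Icc (0 : ℝ) 1) :
    ν {ω | q ω ∈ Ioo a 1} ≤ ENNReal.ofReal (1 - a) :=
  calc ν {ω | q ω ∈ Ioo a 1} ≤ ν {ω | q ω ≤ a}ᶜ := measure_mono fun ω hω => not_le.mpr hω.1
    _ = 1 - ν {ω | q ω ≤ a} := prob_compl_eq_one_sub (measurableSet_le hq measurable_const)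
    _ ≤ 1 - ENNReal.ofReal a := tsub_le_tsub_left (hdom a ha) 1
    _ = ENNReal.ofReal (1 - a) := by rw [ENNReal.ofReal_sub _ ha.1, ENNReal.ofReal_one]

lemma integral_neg_log_one_sub_eq_toReal (hq : Measurable q) (hr : ∀ ω, q ω ∈ Icc (0 : ℝ) 1) :
    ∫ ω, -log (1 - q ω) ∂ν = (∫⁻ ω, ENNReal.ofReal (-log (1 - q ω)) ∂ν).toReal :=
  integral_eq_lintegral_of_nonneg_ae (ae_of_all _ fun ω => neg_log_one_sub_nonneg (hr ω))
    (measurable_neg_log_one_sub hq).aestronglyMeasurable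

lemma integral_neg_log_one_sub_of_map_eq_uniform (hq : Measurable q)
    (hr : ∀ ω, q ω ∈ Icc (0 : ℝ) 1) (hmap : ν.map q = volume.restrict (Icc (0 : ℝ) 1)) :
    ∫ ω, -log (1 - q ω) ∂ν = 1 := by
  rw [integral_neg_log_one_sub_eq_toReal hq hr, lintegral_neg_log_one_sub_eq_one hq hr
    fun a ha => measure_mem_Ioo_one_of_map_eq_uniform hq hmap ha.1, ENNReal.toReal_one]

variable [IsProbabilityMeasure ν]

lemma integrable_neg_log_one_sub (hq : Measurable q) (hr : ∀ ω, q ω ∈ Icc (0 : ℝ) 1)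
    (hdom : ∀ x ∈ Icc (0 : ℝ) 1, ENNReal.ofReal x ≤ ν {ω | q ω ≤ x}) :
    Integrable (fun ω => -log (1 - q ω)) ν :=
  ⟨(measurable_neg_log_one_sub hq).aestronglyMeasurable,
    (hasFiniteIntegral_iff_ofReal (ae_of_all _ fun ω => neg_log_one_sub_nonneg (hr ω))).mpr
      ((lintegral_neg_log_one_sub_le_one hq hr fun _ => measure_mem_Ioo_one_le hq hdom).trans_lt
        ENNReal.one_lt_top)⟩

lemma integral_neg_log_one_sub_le_one (hq : Measurable q) (hr : ∀ ω, q ω ∈ Icc (0 : ℝ) 1)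
    (hdom : ∀ x ∈ Icc (0 : ℝ) 1, ENNReal.ofReal x ≤ ν {ω | q ω ≤ x}) :
    ∫ ω, -log (1 - q ω) ∂ν ≤ 1 := by
  rw [integral_neg_log_one_sub_eq_toReal hq hr]
  exact ENNReal.toReal_le_of_le_ofReal zero_le_one (by
    simpa using lintegral_neg_log_one_sub_le_one hq hr fun _ => measure_mem_Ioo_one_le hq hdom)

end NegLogOneSub

theorem log_estimator_bounds_general {Ω : Type*} [MeasurableSpace Ω]
    (μ : Measure Ω) [IsProbabilityMeasure μ] (m m₀ : ℕ) (hm : m₀ ≤ m)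
    (p : Fin m → Ω → ℝ) (hmeas : ∀ i, Measurable (p i))
    (hrange : ∀ i ω, p i ω ∈ Set.Icc (0:ℝ) 1)
    (hnull : ∀ i : Fin m, (i : ℕ) < m₀ →
      Measure.map (p i) μ = volume.restrict (Set.Icc (0:ℝ) 1))
    (halt : ∀ i : Fin m, m₀ ≤ (i : ℕ) → ∀ x ∈ Set.Icc (0:ℝ) 1,
      ENNReal.ofReal x ≤ μ {ω | p i ω ≤ x}) :
    (m₀ : ℝ) ≤ ∫ ω, ∑ j, -Real.log (1 - p j ω) ∂μ ∧ ∫ ω, ∑ j, -Real.log (1 - p j ω) ∂μ ≤ (m : ℝ) := by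
  have hnull_eq (j : Fin m) (hj : (j : ℕ) < m₀) : ∫ ω, -log (1 - p j ω) ∂μ = 1 :=
    integral_neg_log_one_sub_of_map_eq_uniform (hmeas j) (hrange j) (hnull j hj)
  have hint (j : Fin m) : Integrable (fun ω => -log (1 - p j ω)) μ := by
    rcases lt_or_ge (j : ℕ) m₀ with hj | hj
    · exact .of_integral_ne_zero (by simp [hnull_eq j hj])
    · exact integrable_neg_log_one_sub (hmeas j) (hrange j) (halt j hj)
  have hle (j : Fin m) : ∫ ω, -log (1 - p j ω) ∂μ ≤ 1 := by
    rcases lt_or_ge (j : ℕ) m₀ with hj | hj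
    · exact (hnull_eq j hj).le
    · exact integral_neg_log_one_sub_le_one (hmeas j) (hrange j) (halt j hj)
  rw [integral_finsetSum _ fun j _ => hint j]
  constructor
  · calc (m₀ : ℝ) = ∑ j ∈ Finset.univ.filter (fun j : Fin m => (j : ℕ) < m₀), 1 := by
          simp [Fin.card_filter_val_lt, hm]
      _ = ∑ j ∈ Finset.univ.filter (fun j : Fin m => (j : ℕ) < m₀), ∫ ω, -log (1 - p j ω) ∂μ :=
          Finset.sum_congr rfl fun j hj => (hnull_eq j (Finset.mem_filter.mp hj).2).symm
      _ ≤ ∑ j, ∫ ω, -log (1 - p j ω) ∂μ :=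
          Finset.sum_le_sum_of_subset_of_nonneg (Finset.filter_subset _ _) fun j _ _ =>
            integral_nonneg fun ω => neg_log_one_sub_nonneg (hrange j ω)
  · simpa using Finset.sum_le_sum fun j (_ : j ∈ Finset.univ) => hle j

/-- Let `p 0, ..., p (m₀-1)` be i.i.d. `U[0,1]` (the nulls) and the remaining
`p m₀, ..., p (m-1)` independent with values in `[0,1]`, each stochastically
smaller than `U[0,1]`. Then the estimator `m̃₀' = -∑ᵢ log(1 - p i)` satisfies
`m₀ ≤ E[m̂₀'] ≤ m`. -/
theorem log_estimator_bounds {Ω : Type*} [MeasurableSpace Ω]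
    (μ : Measure Ω) [IsProbabilityMeasure μ] (m m₀ : ℕ) (hm : m₀ ≤ m)
    (p : Fin m → Ω → ℝ) (hmeas : ∀ i, Measurable (p i))
    (hindep : iIndepFun p μ)
    (hrange : ∀ i ω, p i ω ∈ Set.Icc (0:ℝ) 1)
    (hnull : ∀ i : Fin m, (i : ℕ) < m₀ →
      Measure.map (p i) μ = volume.restrict (Set.Icc (0:ℝ) 1))
    (halt : ∀ i : Fin m, m₀ ≤ (i : ℕ) → ∀ x ∈ Set.Icc (0:ℝ) 1,
      ENNReal.ofReal x ≤ μ {ω | p i ω ≤ x}) :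
    (m₀ : ℝ) ≤ ∫ ω, ∑ j, -Real.log (1 - p j ω) ∂μ ∧ ∫ ω, ∑ j, -Real.log (1 - p j ω) ∂μ ≤ (m : ℝ) :=
  log_estimator_bounds_general μ m m₀ hm p hmeas hrange hnull halt
end

section
/- Let p_2, ..., p_m be independent random variables on [0,1] where p_2,...,p_{m_0} are i.i.d. U[0,1]. Define m̃_0^{(1)} = 2 - Σ_{i=2}^m log(1-p_i). Then E[1/m̃_0^{(1)}] ≤ 1/m_0, provided the alternative p-values p_{m_0+1},...,p_m are in [0,1] almost surely. -/
/-!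
Writing `S = ∑ log (1 - pᵢ) ≤ 0`, the Laplace transform `c⁻¹ = ∫₀^∞ e^{-ct} dt` and Tonelli give
`E[1/(2 - S)] = ∫₀^∞ e^{-2t} E[e^{tS}] dt`. By independence `E[e^{tS}]` is the product of the
moment generating functions of the `log (1 - pᵢ)`: each is at most `1` because `log (1 - pᵢ) ≤ 0`,
and it equals `(1 + t)⁻¹` for each of the `m₀ - 1` uniform nulls. Finally
`e^{-2t} ≤ (1 + t)⁻²`, the Laplace-transform form of replacing the constant `2` by two
independent standard exponentials, so the integrand is at most `(1 + t)^{-(m₀ + 1)}`, whose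
integral is `1 / m₀`.
-/

open MeasureTheory ProbabilityTheory Real Set Finset Filter

lemma ofReal_inv_eq_setLIntegral_exp_neg_mul {c : ℝ} (hc : 0 < c) :
    ENNReal.ofReal c⁻¹ = ∫⁻ t in Ioi 0, ENNReal.ofReal (exp (-(c * t))) := by
  have hint : IntegrableOn (fun t => exp (-c * t)) (Ioi 0) :=
    integrableOn_exp_mul_Ioi (neg_lt_zero.2 hc) 0
  have hval : ∫ t in Ioi (0 : ℝ), exp (-c * t) = c⁻¹ := by
    rw [integral_exp_mul_Ioi (neg_lt_zero.2 hc)]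
    simp [neg_div]
  simp_rw [← neg_mul]
  rw [← hval, ofReal_integral_eq_lintegral_ofReal hint (ae_of_all _ fun t => (exp_pos _).le)]

lemma exp_neg_two_mul_le_inv_one_add_sq {t : ℝ} (ht : -1 < t) :
    exp (-(2 * t)) ≤ ((1 + t) ^ 2)⁻¹ := by
  rw [exp_neg]
  refine inv_anti₀ (pow_pos (by linarith) 2) ?_
  calc (1 + t) ^ 2 ≤ exp t ^ 2 :=
        pow_le_pow_left₀ (by linarith) (by linarith [add_one_le_exp t]) 2
    _ = exp (2 * t) := by rw [← exp_nat_mul]; norm_num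

lemma setLIntegral_Ioi_inv_one_add_pow {n : ℕ} (hn : n ≠ 0) :
    ∫⁻ t in Ioi 0, ENNReal.ofReal ((1 + t) ^ (n + 1))⁻¹ = ENNReal.ofReal (n : ℝ)⁻¹ := by
  set g : ℝ → ℝ := fun t => -((1 + t) ^ n)⁻¹ / n
  have hderiv : ∀ t ∈ Ici (0 : ℝ), HasDerivAt g ((1 + t) ^ (n + 1))⁻¹ t := by
    intro t ht
    have hpos : 0 < 1 + t := by linarith [mem_Ici.1 ht]
    have hpow : HasDerivAt (fun x => (1 + x) ^ n) (n * (1 + t) ^ (n - 1)) t := by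
      simpa using ((hasDerivAt_id t).const_add 1).fun_pow n
    refine ((hpow.fun_inv (pow_pos hpos n).ne').neg.div_const (n : ℝ)).congr_deriv ?_
    obtain ⟨k, rfl⟩ := Nat.exists_eq_succ_of_ne_zero hn
    simp only [Nat.succ_eq_add_one, Nat.add_sub_cancel]
    field_simp
    ring
  have hnonneg : ∀ t ∈ Ioi (0 : ℝ), 0 ≤ ((1 + t) ^ (n + 1))⁻¹ := fun t ht => by
    have : 0 < 1 + t := by linarith [mem_Ioi.1 ht]
    positivity
  have hlim : Tendsto g atTop (nhds 0) := by
    simpa using ((tendsto_inv_atTop_zero.comp ((tendsto_pow_atTop hn).comp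
      (tendsto_atTop_add_const_left atTop 1 tendsto_id))).neg.div_const (n : ℝ))
  rw [← ofReal_integral_eq_lintegral_ofReal
      (integrableOn_Ioi_deriv_of_nonneg' hderiv hnonneg hlim)
      ((ae_restrict_iff' measurableSet_Ioi).2 (ae_of_all _ hnonneg)),
    integral_Ioi_of_hasDerivAt_of_nonneg' hderiv hnonneg hlim]
  simp [g, neg_div]

lemma integral_Icc_exp_mul_log_one_sub {t : ℝ} (ht : -1 < t) :
    ∫ x in Icc (0 : ℝ) 1, exp (t * log (1 - x)) = (t + 1)⁻¹ := by
  have hrpow : ∀ᵐ x, x ∈ Icc (0 : ℝ) 1 → exp (t * log (1 - x)) = (1 - x) ^ t := by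
    filter_upwards [compl_mem_ae_iff.2 (volume_singleton (a := (1 : ℝ)))] with x hx1 hx
    rw [rpow_def_of_pos (by grind), mul_comm]
  rw [setIntegral_congr_ae measurableSet_Icc hrpow, integral_Icc_eq_integral_Ioc,
    ← intervalIntegral.integral_of_le zero_le_one,
    intervalIntegral.integral_comp_sub_left (fun x => x ^ t), integral_rpow (Or.inl ht)]
  simp [zero_rpow (by linarith : t + 1 ≠ 0)]

section Probability

variable {Ω : Type*} [MeasurableSpace Ω] {μ : Measure Ω}

lemma lintegral_ofReal_inv_eq_setLIntegral_lintegral_exp [SFinite μ] {Z : Ω → ℝ}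
    (hZ : AEMeasurable Z μ) (hpos : ∀ᵐ ω ∂μ, 0 < Z ω) :
    ∫⁻ ω, ENNReal.ofReal (Z ω)⁻¹ ∂μ
      = ∫⁻ t in Ioi 0, ∫⁻ ω, ENNReal.ofReal (exp (-(Z ω * t))) ∂μ := by
  have hZ' : AEMeasurable (fun p : Ω × ℝ => Z p.1) (μ.prod (volume.restrict (Ioi 0))) :=
    hZ.comp_quasiMeasurePreserving Measure.quasiMeasurePreserving_fst
  rw [← lintegral_lintegral_swap (hZ'.mul measurable_snd.aemeasurable).neg.exp.ennreal_ofReal]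
  exact lintegral_congr_ae (hpos.mono fun ω h => ofReal_inv_eq_setLIntegral_exp_neg_mul h)

lemma lintegral_ofReal_exp_neg_sub_mul {S : Ω → ℝ} {t : ℝ}
    (hint : Integrable (fun ω => exp (t * S ω)) μ) (c : ℝ) :
    ∫⁻ ω, ENNReal.ofReal (exp (-((c - S ω) * t))) ∂μ
      = ENNReal.ofReal (exp (-(c * t)) * mgf S μ t) := by
  calc ∫⁻ ω, ENNReal.ofReal (exp (-((c - S ω) * t))) ∂μ
      = ∫⁻ ω, ENNReal.ofReal (exp (-(c * t))) * ENNReal.ofReal (exp (t * S ω)) ∂μ := by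
        congr with ω
        rw [← ENNReal.ofReal_mul (exp_pos _).le, ← exp_add]
        ring_nf
    _ = ENNReal.ofReal (exp (-(c * t)) * mgf S μ t) := by
        rw [lintegral_const_mul'' _ hint.1.aemeasurable.ennreal_ofReal, mgf,
          ENNReal.ofReal_mul (exp_pos _).le,
          ofReal_integral_eq_lintegral_ofReal hint (ae_of_all _ fun ω => (exp_pos _).le)]

lemma mgf_le_one_of_nonpos [IsProbabilityMeasure μ] {X : Ω → ℝ} {t : ℝ}
    (hX : ∀ᵐ ω ∂μ, X ω ≤ 0) (ht : 0 ≤ t) : mgf X μ t ≤ 1 := by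
  simpa using mgf_mono_of_nonneg (Y := 0) hX ht (by simp)

lemma mgf_log_one_sub_of_map_eq {U : Ω → ℝ} (hU : AEMeasurable U μ)
    (hmap : μ.map U = volume.restrict (Icc 0 1)) {t : ℝ} (ht : -1 < t) :
    mgf (fun ω => log (1 - U ω)) μ t = (t + 1)⁻¹ := by
  rw [mgf, ← integral_map (f := fun x => exp (t * log (1 - x))) hU
    (Measurable.aestronglyMeasurable (by fun_prop)), hmap, integral_Icc_exp_mul_log_one_sub ht]

lemma ProbabilityTheory.iIndepFun.mgf_sum_le_pow_card {ι : Type*} [Fintype ι]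
    {X : ι → Ω → ℝ} (hindep : iIndepFun X μ) (hmeas : ∀ i, AEMeasurable (X i) μ)
    (hnonpos : ∀ i, ∀ᵐ ω ∂μ, X i ω ≤ 0) {t a : ℝ} (ht : 0 ≤ t) (s : Finset ι)
    (hs : ∀ i ∈ s, mgf (X i) μ t = a) : mgf (∑ i, X i) μ t ≤ a ^ #s := by
  have := hindep.isProbabilityMeasure
  calc mgf (∑ i, X i) μ t = ∏ i, mgf (X i) μ t := hindep.mgf_sum₀ hmeas univ
    _ ≤ ∏ i ∈ s, mgf (X i) μ t := prod_le_prod_of_subset_of_le_one (subset_univ s)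
        (fun _ _ => mgf_nonneg) (fun i _ _ => mgf_le_one_of_nonpos (hnonpos i) ht)
    _ = a ^ #s := prod_eq_pow_card hs

lemma integral_inv_two_sub_le_of_mgf_le [IsProbabilityMeasure μ] {S : Ω → ℝ}
    (hS : AEMeasurable S μ) (hS_nonpos : ∀ᵐ ω ∂μ, S ω ≤ 0) {n : ℕ} (hn : n ≠ 0)
    (hmgf : ∀ t, 0 < t → mgf S μ t ≤ ((1 + t) ^ (n - 1))⁻¹) :
    ∫ ω, (2 - S ω)⁻¹ ∂μ ≤ (n : ℝ)⁻¹ := by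
  have hpos : ∀ᵐ ω ∂μ, 0 < 2 - S ω := hS_nonpos.mono fun ω h => by linarith
  have hinner : ∀ t ∈ Ioi (0 : ℝ), ∫⁻ ω, ENNReal.ofReal (exp (-((2 - S ω) * t))) ∂μ
      ≤ ENNReal.ofReal ((1 + t) ^ (n + 1))⁻¹ := by
    intro t ht
    have ht' : (0 : ℝ) < t := ht
    rw [lintegral_ofReal_exp_neg_sub_mul (integrable_exp_mul_of_le t 0 ht'.le hS hS_nonpos)]
    calc ENNReal.ofReal (exp (-(2 * t)) * mgf S μ t)
        ≤ ENNReal.ofReal (((1 + t) ^ 2)⁻¹ * ((1 + t) ^ (n - 1))⁻¹) :=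
          ENNReal.ofReal_le_ofReal (mul_le_mul (exp_neg_two_mul_le_inv_one_add_sq (by linarith))
            (hmgf t ht') mgf_nonneg (by positivity))
      _ = ENNReal.ofReal ((1 + t) ^ (n + 1))⁻¹ := by
          rw [← mul_inv, ← pow_add]
          congr 3
          omega
  rw [integral_eq_lintegral_of_nonneg_ae (hpos.mono fun ω h => (inv_pos.2 h).le)
    (hS.const_sub 2).inv.aestronglyMeasurable]
  refine ENNReal.toReal_le_of_le_ofReal (by positivity) ?_
  calc ∫⁻ ω, ENNReal.ofReal (2 - S ω)⁻¹ ∂μ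
      = ∫⁻ t in Ioi 0, ∫⁻ ω, ENNReal.ofReal (exp (-((2 - S ω) * t))) ∂μ :=
        lintegral_ofReal_inv_eq_setLIntegral_lintegral_exp (hS.const_sub 2) hpos
    _ ≤ ∫⁻ t in Ioi 0, ENNReal.ofReal ((1 + t) ^ (n + 1))⁻¹ :=
        setLIntegral_mono' measurableSet_Ioi hinner
    _ = ENNReal.ofReal (n : ℝ)⁻¹ := setLIntegral_Ioi_inv_one_add_pow hn

end Probability

/-- The index `j : Fin (m - 1)` stands for `p_{j+2}`, so the nulls are the `j` with
`j + 2 ≤ m₀`. -/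
theorem expectation_inv_log_estimator_drop_one {Ω : Type*} [MeasurableSpace Ω]
    (μ : Measure Ω) [IsProbabilityMeasure μ] (m m₀ : ℕ)
    (hm₀ : 1 ≤ m₀) (hm : m₀ ≤ m)
    (p : Fin (m - 1) → Ω → ℝ) (hmeas : ∀ j, Measurable (p j))
    (hindep : iIndepFun p μ)
    (hrange : ∀ j ω, p j ω ∈ Set.Icc (0:ℝ) 1)
    (hnull : ∀ j : Fin (m - 1), (j : ℕ) + 2 ≤ m₀ →
      Measure.map (p j) μ = volume.restrict (Set.Icc (0:ℝ) 1)) :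
    ∫ ω, 1 / (2 - ∑ j, Real.log (1 - p j ω)) ∂μ ≤ 1 / (m₀ : ℝ) := by
  set X : Fin (m - 1) → Ω → ℝ := fun j ω => log (1 - p j ω)
  have hX_meas : ∀ j, Measurable (X j) := fun j => by fun_prop
  have hX_nonpos : ∀ j ω, X j ω ≤ 0 := fun j ω =>
    log_nonpos (by linarith [(hrange j ω).2]) (by linarith [(hrange j ω).1])
  have hX_indep : iIndepFun X μ := hindep.comp (fun _ x => log (1 - x)) fun _ => by fun_prop
  set nulls : Finset (Fin (m - 1)) := {j | (j : ℕ) + 2 ≤ m₀}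
  have hcard : #nulls = m₀ - 1 := by
    have hnulls : nulls = univ.filter fun j : Fin (m - 1) => (j : ℕ) < m₀ - 1 := by
      ext j
      simp only [nulls, mem_filter, Finset.mem_univ, true_and]
      omega
    rw [hnulls, Fin.card_filter_val_lt]
    omega
  have hmgf : ∀ t, 0 < t → mgf (∑ j, X j) μ t ≤ ((1 + t) ^ (m₀ - 1))⁻¹ := by
    intro t ht
    have hnull_mgf : ∀ j ∈ nulls, mgf (X j) μ t = (1 + t)⁻¹ := fun j hj => by
      rw [mgf_log_one_sub_of_map_eq (hmeas j).aemeasurable (hnull j (mem_filter.1 hj).2)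
        (by linarith), add_comm]
    simpa [hcard, inv_pow] using hX_indep.mgf_sum_le_pow_card
      (fun j => (hX_meas j).aemeasurable) (fun j => ae_of_all _ (hX_nonpos j)) ht.le _ hnull_mgf
  simpa [one_div, X] using integral_inv_two_sub_le_of_mgf_le (S := ∑ j, X j) (by fun_prop)
    (ae_of_all _ fun ω => by simpa using sum_nonpos fun j _ => hX_nonpos j ω) (by omega) hmgf
end

section
/- Let m̂_0: [0,1]^m → ℝ be a monotonic estimator for m_0 (non-decreasing in each p-value, and removing a p-value does not increase the estimate). Consider the modified step-up BH procedure with thresholds γ_i = iq/m̂_0(p⃗), applied to m independent p-values of which the first m_0 are i.i.d. U[0,1]. Let m̂_0^{(1)}(p⃗) = m̂_0(p_2,...,p_m). Then FDR = E[V/max(R,1)] ≤ m_0 · q · E[1/m̂_0^{(1)}]. -/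
/-!
The false discovery proportion is the sum, over the true nulls `i`, of the share
`1{p_i rejected} / max(R, 1)`. Freeze all p-values but a null one, `p_i = x`. Since `m̂₀` is
monotone, so are the thresholds `k q / m̂₀`, and `R` is antitone in `x`; hence any two values
`s`, `x` at which `i` is rejected satisfy `s · m̂₀(p with p_i = 0) ≤ q · max(R(x), 1)`. So the
rejection set lies in `[0, q N / m̂₀(p with p_i = 0)]`, where `N` is the least value of `max(R, 1)`
on it, and integrating `x` against `U[0,1]` bounds the expected share by
`q / m̂₀(p with p_i = 0) ≤ q / m̂₀(p without p_i)`. As `p_1, …, p_i` are i.i.d. uniform, the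
vector of the other p-values has the law of `(p_2, …, p_m)`, which gives `q E[1 / m̂₀⁽¹⁾]`.

The estimator `m̂₀` need not be measurable. It is replaced by its lower envelope over a countable
dense grid containing every atom of the marginals; this envelope is measurable, monotone, and
equal to `m̂₀` almost everywhere under any product of the marginals, because wherever it differs
from the upper envelope a rational gap separates the two, and a measurable set with no grid
point between two of its points is null (Fubini and induction on the dimension).
-/

open MeasureTheory ProbabilityTheory Finset
open scoped Classical ENNReal

/-- The number of rejections of the step-up procedure with thresholds `γ`:
`R = max {k ≤ m : p_(k) ≤ γ k}` (with `R = 0` if no such `k ≥ 1` exists),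
using the standard equivalence `p_(k) ≤ t ↔ #{i : p i ≤ t} ≥ k`. -/
noncomputable def stepUpRejections (m : ℕ) (γ : ℕ → ℝ) (x : Fin m → ℝ) : ℕ :=
  ((Finset.range (m + 1)).filter
    (fun k => k ≤ (Finset.univ.filter (fun i : Fin m => x i ≤ γ k)).card)).sup id

theorem Fin.insertNth_mono {α : Type*} [Preorder α] {n : ℕ} (i : Fin (n + 1)) {x x' : α}
    {y y' : Fin n → α} (hx : x ≤ x') (hy : y ≤ y') :
    (i.insertNth x y : Fin (n + 1) → α) ≤ i.insertNth x' y' :=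
  (Fin.insertNthOrderIso (fun _ => α) i).monotone (Prod.mk_le_mk.2 ⟨hx, hy⟩)

theorem Fin.comp_insertNth {α β : Type*} {n : ℕ} (g : α → β) (i : Fin (n + 1)) (x : α)
    (y : Fin n → α) : g ∘ i.insertNth x y = i.insertNth (g x) (g ∘ y) := by
  funext k
  induction k using i.succAboveCases <;> simp

theorem Fin.comp_succAbove_eq_comp_succ {α : Type*} {n : ℕ} (f : Fin (n + 1) → α)
    {i : Fin (n + 1)} (h : ∀ j ≤ i, f j = f 0) : f ∘ i.succAbove = f ∘ Fin.succ := by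
  funext k
  rcases lt_or_ge k.castSucc i with hk | hk
  · rw [Function.comp_apply, Fin.succAbove_of_castSucc_lt _ _ hk, h _ hk.le,
      Function.comp_apply, h _ (Fin.castSucc_lt_iff_succ_le.1 hk)]
  · rw [Function.comp_apply, Fin.succAbove_of_le_castSucc _ _ hk, Function.comp_apply]

theorem MeasureTheory.Measure.pi_apply_eq_lintegral_cons {α : Type*} [MeasurableSpace α] {n : ℕ}
    (κ : Fin (n + 1) → Measure α) [∀ k, SigmaFinite (κ k)] {S : Set (Fin (n + 1) → α)}
    (hS : MeasurableSet S) :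
    Measure.pi κ S = ∫⁻ t, Measure.pi (fun k => κ k.succ) {y | Fin.cons t y ∈ S} ∂κ 0 := by
  have e := (measurePreserving_piFinSuccAbove κ 0).symm
  rw [← e.measure_preimage hS.nullMeasurableSet,
    Measure.prod_apply ((MeasurableEquiv.piFinSuccAbove _ 0).symm.measurable hS)]
  simp [Set.preimage, Fin.consEquiv]

theorem lintegral_pi_eq_lintegral_insertNth {α : Type*} [MeasurableSpace α] {n : ℕ}
    (κ : Fin (n + 1) → Measure α) [∀ k, SigmaFinite (κ k)] (i : Fin (n + 1))
    {f : (Fin (n + 1) → α) → ℝ≥0∞} (hf : Measurable f) :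
    ∫⁻ z, f z ∂Measure.pi κ =
      ∫⁻ y, ∫⁻ x, f (i.insertNth x y) ∂κ i ∂Measure.pi fun k => κ (i.succAbove k) := by
  rw [← (measurePreserving_piFinSuccAbove κ i).symm.lintegral_comp_emb
    (MeasurableEquiv.measurableEmbedding _)]
  exact lintegral_prod_symm _ (hf.comp (MeasurableEquiv.measurable _)).aemeasurable

theorem exists_denseRange_forall_measure_singleton_ne_zero {ι : Type*} [Countable ι]
    (κ : ι → Measure ℝ) [∀ i, SFinite (κ i)] :
    ∃ d : ℕ → ℝ, DenseRange d ∧ ∀ i t, κ i {t} ≠ 0 → t ∈ Set.range d := by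
  let A : Set ℝ := Set.range ((↑) : ℚ → ℝ) ∪ ⋃ i, {t | 0 < κ i {a | a = t}}
  have hA : A.Countable := (Set.countable_range _).union
    (Set.countable_iUnion fun i => Measure.countable_meas_level_set_pos measurable_id)
  obtain ⟨d, hdA⟩ := hA.exists_eq_range ⟨0, Or.inl ⟨0, Rat.cast_zero⟩⟩
  refine ⟨d, Rat.denseRange_cast.mono (hdA ▸ Set.subset_union_left), fun i t ht => ?_⟩
  exact hdA ▸ Or.inr (Set.mem_iUnion.2 ⟨i, pos_iff_ne_zero.2 (by simpa using ht)⟩)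

section GridEnvelope

variable {n : ℕ} (d : ℕ → ℝ)

def HasGridPointBetween (S : Set (Fin n → ℝ)) : Prop :=
  ∃ c : Fin n → ℕ, d ∘ c ∈ upperClosure S ∧ d ∘ c ∈ lowerClosure S

variable {d}

theorem hasGridPointBetween_of_sections {S : Set (Fin (n + 1) → ℝ)} {t₁ t₂ : ℝ} {j : ℕ}
    {c : Fin n → ℕ} (h₁ : t₁ ≤ d j) (h₂ : d j ≤ t₂)
    (hup : d ∘ c ∈ upperClosure {y | Fin.cons t₁ y ∈ S})
    (hlow : d ∘ c ∈ lowerClosure {y | Fin.cons t₂ y ∈ S}) : HasGridPointBetween d S := by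
  obtain ⟨a, ha, hac⟩ := mem_upperClosure.1 hup
  obtain ⟨b, hb, hcb⟩ := mem_lowerClosure.1 hlow
  refine ⟨Fin.cons j c, ?_, ?_⟩ <;> rw [Fin.comp_cons]
  · exact mem_upperClosure.2 ⟨_, ha, Fin.cons_le_cons.2 ⟨h₁, hac⟩⟩
  · exact mem_lowerClosure.2 ⟨_, hb, Fin.cons_le_cons.2 ⟨h₂, hcb⟩⟩

/-- A grid point `c` can lie between points of at most one section: between two sections there is
a grid value `d j`, and `Fin.cons j c` would lie between points of `S`. -/
theorem countable_setOf_hasGridPointBetween_section (hd : DenseRange d)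
    {S : Set (Fin (n + 1) → ℝ)} (hS : ¬HasGridPointBetween d S) :
    {t | HasGridPointBetween d {y | Fin.cons t y ∈ S}}.Countable := by
  refine (Set.countable_iUnion fun c : Fin n → ℕ => Set.Subsingleton.countable (s := {t |
    d ∘ c ∈ upperClosure {y | Fin.cons t y ∈ S} ∧ d ∘ c ∈ lowerClosure {y | Fin.cons t y ∈ S}})
    ?_).mono fun t ⟨c, hc⟩ => Set.mem_iUnion.2 ⟨c, hc⟩
  intro t₁ h₁ t₂ h₂
  by_contra hne
  rcases lt_or_gt_of_ne hne with hlt | hlt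
  · obtain ⟨_, ⟨j, rfl⟩, hj⟩ := hd.exists_between hlt
    exact hS (hasGridPointBetween_of_sections hj.1.le hj.2.le h₁.1 h₂.2)
  · obtain ⟨_, ⟨j, rfl⟩, hj⟩ := hd.exists_between hlt
    exact hS (hasGridPointBetween_of_sections hj.1.le hj.2.le h₂.1 h₁.2)

/-- The sections of `S` with a grid point between two of their points lie over a countable set of
non-grid values, which carries no atoms; the other sections are null by induction on `n`. -/
theorem MeasureTheory.Measure.pi_eq_zero_of_not_hasGridPointBetween (hd : DenseRange d)
    (κ : Fin n → Measure ℝ) [∀ k, SigmaFinite (κ k)]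
    (hatoms : ∀ k t, κ k {t} ≠ 0 → t ∈ Set.range d) {S : Set (Fin n → ℝ)} (hSm : MeasurableSet S)
    (hS : ¬HasGridPointBetween d S) : Measure.pi κ S = 0 := by
  induction n with
  | zero =>
    suffices S = ∅ by simp [this]
    refine Set.eq_empty_of_forall_notMem fun z hz => hS ⟨Fin.elim0, ?_, ?_⟩ <;>
      simp only [mem_upperClosure, mem_lowerClosure] <;>
      exact ⟨z, hz, (Subsingleton.elim _ _).le⟩
  | succ n ih =>
    set T := {t | HasGridPointBetween d {y | Fin.cons t y ∈ S}}
    have hT_null : κ 0 T = 0 := by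
      rw [← Set.biUnion_of_singleton T,
        measure_biUnion_null_iff (countable_setOf_hasGridPointBetween_section hd hS)]
      intro t ⟨c, hup, hlow⟩
      by_contra hatom
      obtain ⟨j, rfl⟩ := hatoms 0 t hatom
      exact hS (hasGridPointBetween_of_sections le_rfl le_rfl hup hlow)
    have hcons : ∀ t : ℝ, Measurable fun y : Fin n → ℝ => (Fin.cons t y : Fin (n + 1) → ℝ) :=
      fun t => measurable_pi_iff.2 (Fin.cases measurable_const measurable_pi_apply)
    rw [Measure.pi_apply_eq_lintegral_cons κ hSm, ← lintegral_zero]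
    refine lintegral_congr_ae ?_
    filter_upwards [measure_eq_zero_iff_ae_notMem.1 hT_null] with t ht
    exact ih (fun k => κ k.succ) (fun k => hatoms k.succ) (hcons t hSm) ht

variable (d)

noncomputable def lowerGridEnvelope (f : (Fin n → ℝ) → ℝ≥0∞) (z : Fin n → ℝ) : ℝ≥0∞ :=
  ⨆ c : Fin n → ℕ, if d ∘ c ≤ z then f (d ∘ c) else 0

noncomputable def upperGridEnvelope (f : (Fin n → ℝ) → ℝ≥0∞) (z : Fin n → ℝ) : ℝ≥0∞ :=
  ⨅ c : Fin n → ℕ, if z ≤ d ∘ c then f (d ∘ c) else ⊤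

variable {d} {f : (Fin n → ℝ) → ℝ≥0∞}

theorem measurable_lowerGridEnvelope : Measurable (lowerGridEnvelope d f) :=
  .iSup fun _ => .ite measurableSet_Ici measurable_const measurable_const

theorem measurable_upperGridEnvelope : Measurable (upperGridEnvelope d f) :=
  .iInf fun _ => .ite measurableSet_Iic measurable_const measurable_const

theorem le_lowerGridEnvelope {z : Fin n → ℝ} {c : Fin n → ℕ} (h : d ∘ c ≤ z) :
    f (d ∘ c) ≤ lowerGridEnvelope d f z :=
  le_iSup_of_le c (by rw [if_pos h])

theorem upperGridEnvelope_le {z : Fin n → ℝ} {c : Fin n → ℕ} (h : z ≤ d ∘ c) :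
    upperGridEnvelope d f z ≤ f (d ∘ c) :=
  iInf_le_of_le c (by rw [if_pos h])

theorem monotone_lowerGridEnvelope : Monotone (lowerGridEnvelope d f) := fun _ _ h =>
  iSup_mono fun c => by
    split_ifs with h₁ h₂
    exacts [le_rfl, absurd (h₁.trans h) h₂, bot_le, le_rfl]

theorem lowerGridEnvelope_le (hf : Monotone f) (z : Fin n → ℝ) : lowerGridEnvelope d f z ≤ f z :=
  iSup_le fun c => by split_ifs with h; exacts [hf h, bot_le]

theorem le_upperGridEnvelope (hf : Monotone f) (z : Fin n → ℝ) : f z ≤ upperGridEnvelope d f z :=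
  le_iInf fun c => by split_ifs with h; exacts [hf h, le_top]

theorem lowerGridEnvelope_ae_eq (hd : DenseRange d) (hf : Monotone f)
    (κ : Fin n → Measure ℝ) [∀ k, SigmaFinite (κ k)]
    (hatoms : ∀ k t, κ k {t} ≠ 0 → t ∈ Set.range d) :
    lowerGridEnvelope d f =ᵐ[Measure.pi κ] f := by
  let gap : ℚ → ℚ → Set (Fin n → ℝ) := fun a b => {z | lowerGridEnvelope d f z ≤ ENNReal.ofReal a ∧
      ENNReal.ofReal a < ENNReal.ofReal b ∧ ENNReal.ofReal b ≤ upperGridEnvelope d f z}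
  have hcover : {z | lowerGridEnvelope d f z ≠ f z} ⊆ ⋃ (a : ℚ) (b : ℚ), gap a b := by
    intro z hz
    have hlt : lowerGridEnvelope d f z < upperGridEnvelope d f z :=
      ((lowerGridEnvelope_le hf z).lt_of_ne hz).trans_le (le_upperGridEnvelope hf z)
    obtain ⟨a, -, hza, hab⟩ := ENNReal.lt_iff_exists_rat_btwn.1 hlt
    obtain ⟨b, -, hab, hbz⟩ := ENNReal.lt_iff_exists_rat_btwn.1 hab
    exact Set.mem_iUnion₂.2 ⟨a, b, hza.le, hab, hbz.le⟩
  refine measure_mono_null hcover (measure_iUnion_null fun a => measure_iUnion_null fun b => ?_)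
  refine Measure.pi_eq_zero_of_not_hasGridPointBetween hd κ hatoms ?_ fun ⟨c, hup, hlow⟩ => ?_
  · exact (measurableSet_le measurable_lowerGridEnvelope measurable_const).inter
      ((MeasurableSet.const _).inter
        (measurableSet_le measurable_const measurable_upperGridEnvelope))
  · obtain ⟨z, ⟨-, -, hbz⟩, hzc⟩ := mem_upperClosure.1 hup
    obtain ⟨z', ⟨hza, hab, -⟩, hcz⟩ := mem_lowerClosure.1 hlow
    exact hab.not_ge (hbz.trans ((upperGridEnvelope_le hzc).trans
      ((le_lowerGridEnvelope hcz).trans hza)))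

theorem lowerGridEnvelope_le_lowerGridEnvelope_insertNth {g : (Fin n → ℝ) → ℝ≥0∞}
    {f : (Fin (n + 1) → ℝ) → ℝ≥0∞} {i : Fin (n + 1)} (hgf : ∀ z, g (z ∘ i.succAbove) ≤ f z)
    {x : ℝ} {j : ℕ} (hj : d j ≤ x) (y : Fin n → ℝ) :
    lowerGridEnvelope d g y ≤ lowerGridEnvelope d f (i.insertNth x y) := by
  refine iSup_le fun c => ?_
  split_ifs with hc
  · have hcomp := Fin.comp_insertNth d i j c
    calc g (d ∘ c) = g ((d ∘ i.insertNth j c) ∘ i.succAbove) := by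
          rw [hcomp, Fin.insertNth_comp_succAbove]
      _ ≤ f (d ∘ i.insertNth j c) := hgf _
      _ ≤ lowerGridEnvelope d f (i.insertNth x y) :=
          le_lowerGridEnvelope (hcomp ▸ Fin.insertNth_mono i hj hc)
  · exact bot_le

end GridEnvelope

section RealGridEnvelope

variable {n : ℕ}

noncomputable def realLowerGridEnvelope (d : ℕ → ℝ) (φ : (Fin n → ℝ) → ℝ) (z : Fin n → ℝ) : ℝ :=
  (lowerGridEnvelope d (ENNReal.ofReal ∘ φ) z).toReal

variable {d : ℕ → ℝ} {φ : (Fin n → ℝ) → ℝ}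

theorem measurable_realLowerGridEnvelope : Measurable (realLowerGridEnvelope d φ) :=
  measurable_lowerGridEnvelope.ennreal_toReal

theorem lowerGridEnvelope_ofReal_ne_top (hφ : Monotone φ) (z : Fin n → ℝ) :
    lowerGridEnvelope d (ENNReal.ofReal ∘ φ) z ≠ ⊤ :=
  ((lowerGridEnvelope_le (ENNReal.ofReal_mono.comp hφ) z).trans_lt ENNReal.ofReal_lt_top).ne

theorem monotone_realLowerGridEnvelope (hφ : Monotone φ) :
    Monotone (realLowerGridEnvelope d φ) := fun _ z h =>
  ENNReal.toReal_mono (lowerGridEnvelope_ofReal_ne_top hφ z) (monotone_lowerGridEnvelope h)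

theorem realLowerGridEnvelope_pos (hd : DenseRange d) (hφ : Monotone φ) (hφ₀ : ∀ x, 0 < φ x)
    (z : Fin n → ℝ) : 0 < realLowerGridEnvelope d φ z := by
  have hbelow : ∀ k, ∃ j, d j ≤ z k := fun k => by
    obtain ⟨_, ⟨j, rfl⟩, hj⟩ := hd.exists_between (sub_one_lt (z k))
    exact ⟨j, hj.2.le⟩
  choose c hc using hbelow
  refine ENNReal.toReal_pos ?_ (lowerGridEnvelope_ofReal_ne_top hφ z)
  exact ((ENNReal.ofReal_pos.2 (hφ₀ _)).trans_le (le_lowerGridEnvelope hc)).ne'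

theorem realLowerGridEnvelope_ae_eq (hd : DenseRange d) (hφ : Monotone φ) (hφ₀ : ∀ x, 0 ≤ φ x)
    (κ : Fin n → Measure ℝ) [∀ k, SigmaFinite (κ k)]
    (hatoms : ∀ k t, κ k {t} ≠ 0 → t ∈ Set.range d) :
    realLowerGridEnvelope d φ =ᵐ[Measure.pi κ] φ := by
  filter_upwards [lowerGridEnvelope_ae_eq hd (ENNReal.ofReal_mono.comp hφ) κ hatoms] with z hz
  rw [realLowerGridEnvelope, hz, Function.comp_apply, ENNReal.toReal_ofReal (hφ₀ z)]

theorem realLowerGridEnvelope_le_insertNth (hd : DenseRange d) {φ' : (Fin (n + 1) → ℝ) → ℝ}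
    (hφ' : Monotone φ') {i : Fin (n + 1)} (hdrop : ∀ z, φ (z ∘ i.succAbove) ≤ φ' z) (x : ℝ)
    (y : Fin n → ℝ) :
    realLowerGridEnvelope d φ y ≤ realLowerGridEnvelope d φ' (i.insertNth x y) := by
  obtain ⟨_, ⟨j, rfl⟩, hj⟩ := hd.exists_between (sub_one_lt x)
  exact ENNReal.toReal_mono (lowerGridEnvelope_ofReal_ne_top hφ' _)
    (lowerGridEnvelope_le_lowerGridEnvelope_insertNth (fun z => ENNReal.ofReal_le_ofReal (hdrop z))
      hj.2.le y)

theorem ProbabilityTheory.iIndepFun.ae_realLowerGridEnvelope_comp_eq {Ω : Type*}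
    [MeasurableSpace Ω] {μ : Measure Ω} [IsProbabilityMeasure μ] {p : Fin n → Ω → ℝ}
    (hmeas : ∀ j, Measurable (p j)) (hindep : iIndepFun p μ) (hd : DenseRange d)
    (hatoms : ∀ j t, μ.map (p j) {t} ≠ 0 → t ∈ Set.range d) (hφ : Monotone φ)
    (hφ₀ : ∀ x, 0 ≤ φ x) :
    ∀ᵐ ω ∂μ, realLowerGridEnvelope d φ (fun j => p j ω) = φ fun j => p j ω := by
  have h := realLowerGridEnvelope_ae_eq hd hφ hφ₀ _ hatoms
  rw [← hindep.map_fun_eq_pi_map fun j => (hmeas j).aemeasurable] at h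
  exact ae_of_ae_map (measurable_pi_lambda _ hmeas).aemeasurable h

end RealGridEnvelope

section StepUp

variable {m : ℕ}

theorem stepUpRejections_mono {γ γ' : ℕ → ℝ} {x x' : Fin m → ℝ} (hγ : γ ≤ γ') (hx : x' ≤ x) :
    stepUpRejections m γ x ≤ stepUpRejections m γ' x' :=
  Finset.sup_mono fun k hk => by
    simp only [Finset.mem_filter] at hk ⊢
    exact ⟨hk.1, hk.2.trans (Finset.card_le_card fun j hj => by
      simp only [Finset.mem_filter, Finset.mem_univ, true_and] at hj ⊢
      exact (hx j).trans (hj.trans (hγ k)))⟩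

theorem measurable_stepUpRejections {α : Type*} [MeasurableSpace α] {γ : α → ℕ → ℝ}
    {x : α → Fin m → ℝ} (hγ : ∀ k, Measurable fun a => γ a k)
    (hx : ∀ j, Measurable fun a => x a j) :
    Measurable fun a => stepUpRejections m (γ a) (x a) := by
  have hcount : ∀ k, Measurable fun a => #{j | x a j ≤ γ a k} := fun k => by
    simp only [Finset.card_filter]
    exact Finset.measurable_sum _ fun j _ =>
      .ite (measurableSet_le (hx j) (hγ k)) measurable_const measurable_const
  have hsup : (fun a => stepUpRejections m (γ a) (x a)) = fun a =>
      (range (m + 1)).sup' nonempty_range_add_one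
        fun k => if k ≤ #{j | x a j ≤ γ a k} then k else 0 := by
    funext a
    rw [Finset.sup'_eq_sup, Finset.sup_ite]
    exact (max_eq_left (Finset.sup_le fun _ _ => Nat.zero_le _)).symm
  rw [hsup]
  exact Finset.measurable_range_sup'' fun k _ =>
    .ite (hcount k measurableSet_Ici) measurable_const measurable_const

end StepUp

theorem lintegral_indicator_inv_natCast_le {S : Set ℝ} {N : ℝ → ℕ} {a : ℝ}
    (hS₀ : ∀ s ∈ S, 0 ≤ s) (hN : ∀ x ∈ S, 0 < N x) (hSN : ∀ s ∈ S, ∀ x ∈ S, s ≤ a * N x) :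
    ∫⁻ x, S.indicator (fun x => (N x : ℝ≥0∞)⁻¹) x ≤ ENNReal.ofReal a := by
  rcases S.eq_empty_or_nonempty with rfl | hne
  · simp
  -- the whole of `S` lies in `[0, a N₀]`, where `N₀` is the least value of `N` on `S`
  obtain ⟨x₀, hx₀, hN₀⟩ := Nat.sInf_mem (hne.image N)
  have hmin : ∀ x ∈ S, N x₀ ≤ N x := fun x hx => hN₀ ▸ Nat.sInf_le ⟨x, hx, rfl⟩
  have hbound : S.indicator (fun x => (N x : ℝ≥0∞)⁻¹) ≤
      (Set.Icc 0 (a * N x₀)).indicator fun _ => (N x₀ : ℝ≥0∞)⁻¹ := by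
    intro x
    by_cases hx : x ∈ S
    · rw [Set.indicator_of_mem hx,
        Set.indicator_of_mem (show x ∈ Set.Icc 0 (a * N x₀) from ⟨hS₀ x hx, hSN x hx x₀ hx₀⟩)]
      exact ENNReal.inv_le_inv.2 (Nat.cast_le.2 (hmin x hx))
    · simp [hx]
  have hN₀ : (N x₀ : ℝ≥0∞) ≠ 0 := Nat.cast_ne_zero.2 (hN x₀ hx₀).ne'
  calc _ ≤ ∫⁻ x, (Set.Icc 0 (a * N x₀)).indicator (fun _ => (N x₀ : ℝ≥0∞)⁻¹) x :=
        lintegral_mono hbound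
    _ = ENNReal.ofReal a := by
        rw [lintegral_indicator_const measurableSet_Icc, Real.volume_Icc, sub_zero,
          ENNReal.ofReal_mul' (Nat.cast_nonneg _), ENNReal.ofReal_natCast,
          mul_comm, mul_assoc, ENNReal.mul_inv_cancel hN₀ (ENNReal.natCast_ne_top _), mul_one]

theorem setLIntegral_Ici_rejected_le {q : ℝ} (hq : 0 ≤ q) {ρ : ℝ → ℕ} {ψ : ℝ → ℝ} (hρ : Antitone ρ)
    (hψ : Monotone ψ) (hψ₀ : ∀ x, 0 < ψ x) :
    ∫⁻ x in Set.Ici 0, (if x ≤ ρ x * q / ψ x then ((max (ρ x) 1 : ℕ) : ℝ≥0∞)⁻¹ else 0) ≤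
      ENNReal.ofReal (q / ψ 0) := by
  set S := {x : ℝ | 0 ≤ x ∧ x ≤ ρ x * q / ψ x}
  have hrej : ∀ x ∈ S, x * ψ x ≤ q * ρ x := fun x hx => by
    rw [mul_comm q]; exact (le_div_iff₀ (hψ₀ x)).1 hx.2
  have hSN : ∀ s ∈ S, ∀ x ∈ S, s ≤ q / ψ 0 * (max (ρ x) 1 : ℕ) := by
    intro s hs x hx
    rw [div_mul_eq_mul_div, le_div_iff₀ (hψ₀ 0)]
    have hρx : q * ρ x ≤ q * (max (ρ x) 1 : ℕ) := by gcongr; exact le_max_left _ _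
    rcases le_total s x with hsx | hxs
    · calc s * ψ 0 ≤ x * ψ x := mul_le_mul hsx (hψ hx.1) (hψ₀ 0).le hx.1
        _ ≤ _ := (hrej x hx).trans hρx
    · calc s * ψ 0 ≤ s * ψ s := mul_le_mul_of_nonneg_left (hψ hs.1) hs.1
        _ ≤ q * ρ s := hrej s hs
        _ ≤ q * ρ x := by gcongr; exact hρ hxs
        _ ≤ _ := hρx
  calc _ = ∫⁻ x, S.indicator (fun x => ((max (ρ x) 1 : ℕ) : ℝ≥0∞)⁻¹) x := by
        rw [← lintegral_indicator measurableSet_Ici]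
        congr 1 with x
        by_cases h0 : 0 ≤ x <;> by_cases hx : x ≤ ρ x * q / ψ x <;> simp [S, h0, hx]
    _ ≤ _ := lintegral_indicator_inv_natCast_le (fun s hs => hs.1)
        (fun _ _ => lt_max_of_lt_right one_pos) hSN

section AdaptiveStepUp

variable {m : ℕ} {q : ℝ} {ψ : (Fin m → ℝ) → ℝ}

variable (q ψ) in
noncomputable def adaptiveRejections (z : Fin m → ℝ) : ℕ :=
  stepUpRejections m (fun k => k * q / ψ z) z

variable (q ψ) in
noncomputable def rejectionShare (i : Fin m) (z : Fin m → ℝ) : ℝ≥0∞ :=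
  if z i ≤ adaptiveRejections q ψ z * q / ψ z then
    ((max (adaptiveRejections q ψ z) 1 : ℕ) : ℝ≥0∞)⁻¹ else 0

theorem antitone_adaptiveRejections (hq : 0 ≤ q) (hψ : Monotone ψ) (hψ₀ : ∀ z, 0 < ψ z) :
    Antitone (adaptiveRejections q ψ) := fun z _ h =>
  stepUpRejections_mono (fun k => div_le_div_of_nonneg_left (by positivity) (hψ₀ z) (hψ h)) h

theorem measurable_adaptiveRejections (hψ : Measurable ψ) :
    Measurable (adaptiveRejections q ψ) :=
  measurable_stepUpRejections (fun _ => measurable_const.div hψ) measurable_pi_apply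

theorem measurable_rejectionShare (hψ : Measurable ψ) (i : Fin m) :
    Measurable (rejectionShare q ψ i) := by
  have hR := measurable_adaptiveRejections (q := q) hψ
  refine .ite (measurableSet_le (measurable_pi_apply i) ?_)
    ((measurable_from_nat (f := fun r : ℕ => ((max r 1 : ℕ) : ℝ≥0∞)⁻¹)).comp hR) measurable_const
  exact ((measurable_from_nat.comp hR).mul measurable_const).div hψ

end AdaptiveStepUp

theorem setLIntegral_rejectionShare_insertNth_le {n : ℕ} {q : ℝ} (hq : 0 ≤ q)
    {ψ : (Fin (n + 1) → ℝ) → ℝ} (hψ : Monotone ψ) (hψ₀ : ∀ z, 0 < ψ z) (i : Fin (n + 1))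
    (y : Fin n → ℝ) :
    ∫⁻ x in Set.Ici 0, rejectionShare q ψ i (i.insertNth x y) ≤
      ENNReal.ofReal (q / ψ (i.insertNth 0 y)) := by
  have hline : Monotone fun x : ℝ => (i.insertNth x y : Fin (n + 1) → ℝ) :=
    fun _ _ h => Fin.insertNth_mono i h le_rfl
  simp only [rejectionShare, Fin.insertNth_apply_same]
  exact setLIntegral_Ici_rejected_le hq
    ((antitone_adaptiveRejections hq hψ hψ₀).comp_monotone hline) (hψ.comp hline) fun _ => hψ₀ _

theorem ofReal_card_filter_div_eq_sum_rejectionShare {m : ℕ} (q : ℝ)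
    (ψ : (Fin m → ℝ) → ℝ) (s : Finset (Fin m)) (z : Fin m → ℝ) :
    ENNReal.ofReal ((#{i ∈ s | z i ≤ adaptiveRejections q ψ z * q / ψ z} : ℝ) /
      max (adaptiveRejections q ψ z) 1) = ∑ i ∈ s, rejectionShare q ψ i z := by
  rw [ENNReal.ofReal_div_of_pos (by positivity), ENNReal.ofReal_natCast,
    ENNReal.ofReal_natCast, div_eq_mul_inv, ← nsmul_eq_mul, ← Finset.sum_const,
    Finset.sum_filter]
  rfl

theorem lintegral_rejectionShare_le {Ω : Type*} [MeasurableSpace Ω] {μ : Measure Ω}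
    [IsProbabilityMeasure μ] {n : ℕ} {p : Fin (n + 1) → Ω → ℝ} (hmeas : ∀ j, Measurable (p j))
    (hindep : iIndepFun p μ) {i : Fin (n + 1)}
    (hnull : ∀ j ≤ i, μ.map (p j) = volume.restrict (Set.Icc 0 1)) {q : ℝ} (hq : 0 ≤ q)
    {ψ : (Fin (n + 1) → ℝ) → ℝ} {ψ' : (Fin n → ℝ) → ℝ} (hψm : Measurable ψ) (hψ : Monotone ψ)
    (hψ₀ : ∀ z, 0 < ψ z) (hψ'₀ : ∀ y, 0 < ψ' y) (hdrop : ∀ y, ψ' y ≤ ψ (i.insertNth 0 y)) :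
    ∫⁻ ω, rejectionShare q ψ i (fun j => p j ω) ∂μ ≤
      ENNReal.ofReal q * ∫⁻ ω, ENNReal.ofReal (1 / ψ' fun k => p k.succ ω) ∂μ := by
  have hlaw := hindep.map_fun_eq_pi_map fun j => (hmeas j).aemeasurable
  have hlaw' := (hindep.precomp (Fin.succ_injective n)).map_fun_eq_pi_map
    fun j : Fin n => (hmeas j.succ).aemeasurable
  have hmarg : (fun k => μ.map (p (i.succAbove k))) = fun k => μ.map (p k.succ) :=
    Fin.comp_succAbove_eq_comp_succ (fun j => μ.map (p j))
      fun j hj => (hnull j hj).trans (hnull 0 (Fin.zero_le _)).symm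
  have hshare := measurable_rejectionShare (q := q) hψm i
  calc ∫⁻ ω, rejectionShare q ψ i (fun j => p j ω) ∂μ
      = ∫⁻ z, rejectionShare q ψ i z ∂Measure.pi fun j => μ.map (p j) := by
        rw [← hlaw, lintegral_map hshare (measurable_pi_lambda _ hmeas)]
    _ = ∫⁻ y, ∫⁻ x, rejectionShare q ψ i (i.insertNth x y) ∂μ.map (p i)
          ∂Measure.pi fun k => μ.map (p (i.succAbove k)) :=
        lintegral_pi_eq_lintegral_insertNth _ i hshare
    _ ≤ ∫⁻ y, ENNReal.ofReal (q / ψ' y) ∂Measure.pi fun k => μ.map (p k.succ) := by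
        rw [hmarg, hnull i le_rfl]
        refine lintegral_mono fun y => ?_
        refine (lintegral_mono_set Set.Icc_subset_Ici_self).trans
          ((setLIntegral_rejectionShare_insertNth_le hq hψ hψ₀ i y).trans ?_)
        exact ENNReal.ofReal_le_ofReal (div_le_div_of_nonneg_left hq (hψ'₀ y) (hdrop y))
    _ ≤ ∫⁻ ω, ENNReal.ofReal (q / ψ' fun k => p k.succ ω) ∂μ := by
        rw [← hlaw']
        exact lintegral_map_le _ _
    _ = _ := by
        rw [← lintegral_const_mul' _ _ ENNReal.ofReal_ne_top]
        simp only [← ENNReal.ofReal_mul hq, mul_one_div]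

theorem lintegral_sum_rejectionShare_le {Ω : Type*} [MeasurableSpace Ω] {μ : Measure Ω}
    [IsProbabilityMeasure μ] {n : ℕ} {p : Fin (n + 1) → Ω → ℝ} (hmeas : ∀ j, Measurable (p j))
    (hindep : iIndepFun p μ) {s : Finset (Fin (n + 1))}
    (hnull : ∀ i ∈ s, ∀ j ≤ i, μ.map (p j) = volume.restrict (Set.Icc 0 1)) {q : ℝ} (hq : 0 ≤ q)
    {ψ : (Fin (n + 1) → ℝ) → ℝ} {ψ' : (Fin n → ℝ) → ℝ} (hψm : Measurable ψ) (hψ : Monotone ψ)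
    (hψ₀ : ∀ z, 0 < ψ z) (hψ'₀ : ∀ y, 0 < ψ' y)
    (hdrop : ∀ (i : Fin (n + 1)) y, ψ' y ≤ ψ (i.insertNth 0 y)) :
    ∫⁻ ω, ∑ i ∈ s, rejectionShare q ψ i (fun j => p j ω) ∂μ ≤
      #s * ENNReal.ofReal q * ∫⁻ ω, ENNReal.ofReal (1 / ψ' fun k => p k.succ ω) ∂μ := by
  have hshare : ∀ i, Measurable fun ω => rejectionShare q ψ i fun j => p j ω := fun i =>
    (measurable_rejectionShare hψm i).comp (measurable_pi_lambda _ hmeas)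
  rw [lintegral_finsetSum s fun i _ => hshare i, mul_assoc, ← nsmul_eq_mul, ← Finset.sum_const]
  exact Finset.sum_le_sum fun i hi =>
    lintegral_rejectionShare_le hmeas hindep (hnull i hi) hq hψm hψ hψ₀ hψ'₀ (hdrop i)

/-- Adaptive FDR bound: for a positive monotonic estimator `m̂₀` (non-decreasing
in each p-value, and removing a p-value does not increase the estimate), the
modified step-up BH procedure with thresholds `γ_i = i*q/m̂₀(p)` applied to `m`
independent p-values whose first `m₀` are i.i.d. `U[0,1]` satisfies
`FDR = E[V/max(R,1)] ≤ m₀ * q * E[1/m̂₀⁽¹⁾]`, where `m̂₀⁽¹⁾ = m̂₀(p₂,...,p_m)`. -/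
theorem adaptive_fdr_bound {Ω : Type*} [MeasurableSpace Ω]
    (μ : Measure Ω) [IsProbabilityMeasure μ] (m m₀ : ℕ) (hm : m₀ ≤ m)
    (q : ℝ) (hq0 : 0 < q)
    (mhat : ∀ n : ℕ, (Fin n → ℝ) → ℝ)
    (hpos : ∀ n x, 0 < mhat n x)
    (hmono : ∀ n (x y : Fin n → ℝ), (∀ i, x i ≤ y i) → mhat n x ≤ mhat n y)
    (hdrop : ∀ n (x : Fin (n + 1) → ℝ) (i : Fin (n + 1)),
      mhat n (x ∘ i.succAbove) ≤ mhat (n + 1) x)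
    (p : Fin m → Ω → ℝ) (hmeas : ∀ i, Measurable (p i))
    (hindep : iIndepFun p μ)
    (hnull : ∀ i : Fin m, (i : ℕ) < m₀ →
      Measure.map (p i) μ = volume.restrict (Set.Icc (0:ℝ) 1))
    (mh : Ω → ℝ) (hmh : ∀ ω, mh ω = mhat m (fun i => p i ω))
    -- the estimator disregarding the first p-value
    (mh1 : Ω → ℝ) (hmh1 : ∀ ω, mh1 ω = mhat (m - 1)
      (fun j : Fin (m - 1) => p ⟨(j : ℕ) + 1, by omega⟩ ω))
    (R : Ω → ℕ) (hR : ∀ ω,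
      R ω = stepUpRejections m (fun k => k * q / mh ω) (fun i => p i ω))
    (V : Ω → ℕ) (hV : ∀ ω, V ω = (Finset.univ.filter
      (fun i : Fin m => (i : ℕ) < m₀ ∧ p i ω ≤ (R ω) * q / mh ω)).card) :
    ∫⁻ ω, ENNReal.ofReal ((V ω : ℝ) / max (R ω) 1) ∂μ ≤
      (m₀ : ℝ≥0∞) * ENNReal.ofReal q * ∫⁻ ω, ENNReal.ofReal (1 / mh1 ω) ∂μ := by
  rcases m with _ | n
  · simp [hV]
  obtain ⟨d, hd, hatoms⟩ := exists_denseRange_forall_measure_singleton_ne_zero fun j => μ.map (p j)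
  have hψ :=
    hindep.ae_realLowerGridEnvelope_comp_eq hmeas hd hatoms (hmono _) fun x => (hpos _ x).le
  have hψ' := (hindep.precomp (Fin.succ_injective n)).ae_realLowerGridEnvelope_comp_eq
    (fun k => hmeas _) hd (fun k => hatoms k.succ) (hmono _) fun x => (hpos _ x).le
  set ψ := realLowerGridEnvelope d (mhat (n + 1))
  set ψ' := realLowerGridEnvelope d (mhat n)
  set nulls : Finset (Fin (n + 1)) := {i | (i : ℕ) < m₀}
  calc ∫⁻ ω, ENNReal.ofReal ((V ω : ℝ) / max (R ω) 1) ∂μ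
      = ∫⁻ ω, ∑ i ∈ nulls, rejectionShare q ψ i (fun j => p j ω) ∂μ := by
        refine lintegral_congr_ae ?_
        filter_upwards [hψ] with ω h
        rw [hV ω, hR ω, hmh ω, ← h, ← ofReal_card_filter_div_eq_sum_rejectionShare,
          Finset.filter_filter]
        rfl
    _ ≤ #nulls * ENNReal.ofReal q *
          ∫⁻ ω, ENNReal.ofReal (1 / ψ' fun k => p k.succ ω) ∂μ :=
        lintegral_sum_rejectionShare_le hmeas hindep
          (fun i hi j hj => hnull j ((Fin.le_def.1 hj).trans_lt (Finset.mem_filter.1 hi).2))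
          hq0.le measurable_realLowerGridEnvelope (monotone_realLowerGridEnvelope (hmono _))
          (realLowerGridEnvelope_pos hd (hmono _) (hpos _))
          (realLowerGridEnvelope_pos hd (hmono _) (hpos _))
          fun i => realLowerGridEnvelope_le_insertNth hd (hmono _) (hdrop n · i) 0
    _ = _ := by
        rw [show #nulls = m₀ by simp [nulls, Fin.card_filter_val_lt, hm]]
        refine congrArg _ (lintegral_congr_ae ?_)
        filter_upwards [hψ'] with ω h
        rw [h, hmh1 ω]
        rfl
end

section
/- There exist FDR procedures violating monotonicity of the FDR: with m=3 hypotheses, one null p-value p_1 ~ U[0,1], and two alternatives p_2, p_3 i.i.d. with law εU[0,ε] + (1-ε)δ_ε (stochastically smaller than uniform), let P^{(1)} reject only the smallest p-value and P^{(2)} reject the two smallest. Then FDR^{(1)} = Pr(p_1 < min(p_2,p_3)) = ε + O(ε²) and FDR^{(2)} = (1 - Pr(p_1 > max(p_2,p_3)))/2 = ε/2 + O(ε³), so for sufficiently small ε > 0, FDR^{(1)} > FDR^{(2)}. -/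
/-!
Conditioning on the null p-value `x ~ U[0,1]` and using independence, the two probabilities are
`∫₀¹ G(x)² dx` and `∫₀¹ F(x)² dx`, where `G(x) = Pr(p₂ > x)` and `F(x) = Pr(p₂ < x)` are read off
the alternative law. They evaluate exactly to `ε - ε² + ε³/3` and `1 - ε + ε³/3`, so
`FDR⁽¹⁾ - FDR⁽²⁾ = ε(1 - ε)²/2 > 0` for every `ε ∈ (0, 1)`.
-/

open MeasureTheory ProbabilityTheory

open scoped ENNReal

/-- The alternative law `ε·U[0,ε] + (1-ε)·δ_ε`: mass `ε` spread uniformly on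
`[0,ε]` (i.e. Lebesgue measure restricted to `[0,ε]`) plus an atom of mass
`1-ε` at `ε`. -/
noncomputable def altLaw (ε : ℝ) : Measure ℝ :=
  volume.restrict (Set.Icc 0 ε) + ENNReal.ofReal (1 - ε) • Measure.dirac ε

section Independence

variable {Ω α β γ : Type*} [MeasurableSpace Ω] [MeasurableSpace α] [MeasurableSpace β]
  [MeasurableSpace γ] {μ : Measure Ω} [IsFiniteMeasure μ] {X : Ω → α} {Y : Ω → β} {Z : Ω → γ}

lemma measure_preimage_eq_lintegral_prod_map (hX : Measurable X) (hY : Measurable Y)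
    (hZ : Measurable Z) (hXYZ : IndepFun X (fun ω ↦ (Y ω, Z ω)) μ) (hYZ : IndepFun Y Z μ)
    {s : Set (α × β × γ)} (hs : MeasurableSet s) :
    μ ((fun ω ↦ (X ω, Y ω, Z ω)) ⁻¹' s)
      = ∫⁻ x, ((μ.map Y).prod (μ.map Z)) (Prod.mk x ⁻¹' s) ∂(μ.map X) := by
  have hYZm : Measurable fun ω ↦ (Y ω, Z ω) := hY.prodMk hZ
  rw [← Measure.map_apply (hX.prodMk hYZm) hs,
    (indepFun_iff_map_prod_eq_prod_map_map hX.aemeasurable hYZm.aemeasurable).mp hXYZ,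
    (indepFun_iff_map_prod_eq_prod_map_map hY.aemeasurable hZ.aemeasurable).mp hYZ,
    Measure.prod_apply hs]

variable {X Y Z : Ω → ℝ}

lemma measure_lt_min_eq_lintegral (hX : Measurable X) (hY : Measurable Y)
    (hZ : Measurable Z) (hXYZ : IndepFun X (fun ω ↦ (Y ω, Z ω)) μ) (hYZ : IndepFun Y Z μ) :
    μ {ω | X ω < min (Y ω) (Z ω)}
      = ∫⁻ x, μ.map Y (Set.Ioi x) * μ.map Z (Set.Ioi x) ∂(μ.map X) := by
  have hs : MeasurableSet {v : ℝ × ℝ × ℝ | v.1 < min v.2.1 v.2.2} :=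
    measurableSet_lt measurable_fst (measurable_snd.fst.min measurable_snd.snd)
  refine (measure_preimage_eq_lintegral_prod_map hX hY hZ hXYZ hYZ hs).trans
    (lintegral_congr fun x ↦ ?_)
  rw [← Measure.prod_prod]
  congr 1
  ext v
  simp

lemma measure_max_lt_eq_lintegral (hX : Measurable X) (hY : Measurable Y)
    (hZ : Measurable Z) (hXYZ : IndepFun X (fun ω ↦ (Y ω, Z ω)) μ) (hYZ : IndepFun Y Z μ) :
    μ {ω | max (Y ω) (Z ω) < X ω}
      = ∫⁻ x, μ.map Y (Set.Iio x) * μ.map Z (Set.Iio x) ∂(μ.map X) := by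
  have hs : MeasurableSet {v : ℝ × ℝ × ℝ | max v.2.1 v.2.2 < v.1} :=
    measurableSet_lt (measurable_snd.fst.max measurable_snd.snd) measurable_fst
  refine (measure_preimage_eq_lintegral_prod_map hX hY hZ hXYZ hYZ hs).trans
    (lintegral_congr fun x ↦ ?_)
  rw [← Measure.prod_prod]
  congr 1
  ext v
  simp

end Independence

lemma setLIntegral_Icc_ofReal {f : ℝ → ℝ} {a b : ℝ} (hab : a ≤ b) (hf : Continuous f)
    (hf_nonneg : ∀ x ∈ Set.Icc a b, 0 ≤ f x) :
    ∫⁻ x in Set.Icc a b, ENNReal.ofReal (f x) = ENNReal.ofReal (∫ x in a..b, f x) := by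
  rw [intervalIntegral.integral_of_le hab, ← integral_Icc_eq_integral_Ioc,
    ofReal_integral_eq_lintegral_ofReal hf.integrableOn_Icc
      ((ae_restrict_iff' measurableSet_Icc).mpr (ae_of_all _ hf_nonneg))]

section altLaw

variable {ε x : ℝ}

lemma altLaw_apply {s : Set ℝ} (hs : MeasurableSet s) :
    altLaw ε s = volume (s ∩ Set.Icc 0 ε) + ENNReal.ofReal (1 - ε) * s.indicator 1 ε := by
  simp [altLaw, Measure.restrict_apply hs, Measure.dirac_apply' _ hs]

lemma altLaw_Ioi (hε₁ : ε ≤ 1) (hx : 0 ≤ x) :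
    altLaw ε (Set.Ioi x) = if x < ε then ENNReal.ofReal (1 - x) else 0 := by
  have hinter : Set.Ioi x ∩ Set.Icc 0 ε = Set.Ioc x ε := by
    ext y
    simp only [Set.mem_inter_iff, Set.mem_Ioi, Set.mem_Icc, Set.mem_Ioc]
    exact ⟨fun ⟨hxy, _, hyε⟩ ↦ ⟨hxy, hyε⟩, fun ⟨hxy, hyε⟩ ↦ ⟨hxy, hx.trans hxy.le, hyε⟩⟩
  rw [altLaw_apply measurableSet_Ioi, hinter, Real.volume_Ioc]
  split_ifs with h
  · rw [Set.indicator_of_mem (Set.mem_Ioi.mpr h), Pi.one_apply, mul_one,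
      ← ENNReal.ofReal_add (by linarith) (by linarith)]
    ring_nf
  · rw [Set.indicator_of_notMem (by simpa using h), ENNReal.ofReal_of_nonpos (by linarith)]
    simp

lemma altLaw_Iio (hε₀ : 0 ≤ ε) (hε₁ : ε ≤ 1) :
    altLaw ε (Set.Iio x) = if x ≤ ε then ENNReal.ofReal x else 1 := by
  rw [altLaw_apply measurableSet_Iio]
  split_ifs with h
  · have hinter : Set.Iio x ∩ Set.Icc 0 ε = Set.Ico 0 x := by
      ext y
      simp only [Set.mem_inter_iff, Set.mem_Iio, Set.mem_Icc, Set.mem_Ico]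
      grind
    rw [hinter, Real.volume_Ico, Set.indicator_of_notMem (by simpa using h)]
    simp
  · have hinter : Set.Iio x ∩ Set.Icc 0 ε = Set.Icc 0 ε := by
      ext y
      simp only [Set.mem_inter_iff, Set.mem_Iio, Set.mem_Icc]
      grind
    rw [hinter, Real.volume_Icc, Set.indicator_of_mem (Set.mem_Iio.mpr (not_le.mp h)),
      Pi.one_apply, mul_one, ← ENNReal.ofReal_add (by linarith) (by linarith)]
    simp

lemma ofReal_le_altLaw_Iic (hε₀ : 0 ≤ ε) (hε₁ : ε ≤ 1) (hx : x ≤ 1) :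
    ENNReal.ofReal x ≤ altLaw ε (Set.Iic x) := by
  refine le_trans ?_ (measure_mono Set.Iio_subset_Iic_self)
  rw [altLaw_Iio hε₀ hε₁]
  split_ifs
  · exact le_rfl
  · exact ENNReal.ofReal_le_one.mpr hx

end altLaw

section Integrals

variable {ε : ℝ}

lemma lintegral_altLaw_Ioi_sq (hε₀ : 0 ≤ ε) (hε₁ : ε ≤ 1) :
    ∫⁻ x in Set.Icc (0 : ℝ) 1, altLaw ε (Set.Ioi x) * altLaw ε (Set.Ioi x)
      = ENNReal.ofReal (ε - ε ^ 2 + ε ^ 3 / 3) := by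
  rw [← Set.Ico_union_Icc_eq_Icc hε₀ hε₁,
    lintegral_union measurableSet_Icc
      ((Set.Iio_disjoint_Ici le_rfl).mono Set.Ico_subset_Iio_self Set.Icc_subset_Ici_self)]
  have hlow : ∫⁻ x in Set.Ico 0 ε, altLaw ε (Set.Ioi x) * altLaw ε (Set.Ioi x)
      = ∫⁻ x in Set.Icc 0 ε, ENNReal.ofReal ((1 - x) ^ 2) := by
    rw [← setLIntegral_congr Ico_ae_eq_Icc]
    refine setLIntegral_congr_fun measurableSet_Ico fun x hx ↦ ?_
    rw [altLaw_Ioi hε₁ hx.1, if_pos hx.2, ← ENNReal.ofReal_mul (by linarith [hx.2]), sq]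
  have hhigh : ∫⁻ x in Set.Icc ε 1, altLaw ε (Set.Ioi x) * altLaw ε (Set.Ioi x) = 0 := by
    refine (setLIntegral_congr_fun measurableSet_Icc fun x hx ↦ ?_).trans lintegral_zero
    rw [altLaw_Ioi hε₁ (hε₀.trans hx.1), if_neg (not_lt.mpr hx.1), zero_mul]
  rw [hlow, hhigh, add_zero, setLIntegral_Icc_ofReal hε₀ (by fun_prop) fun x _ ↦ sq_nonneg _,
    intervalIntegral.integral_comp_sub_left (fun x ↦ x ^ 2), integral_pow]
  ring_nf

lemma lintegral_altLaw_Iio_sq (hε₀ : 0 ≤ ε) (hε₁ : ε ≤ 1) :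
    ∫⁻ x in Set.Icc (0 : ℝ) 1, altLaw ε (Set.Iio x) * altLaw ε (Set.Iio x)
      = ENNReal.ofReal (1 - ε + ε ^ 3 / 3) := by
  rw [← Set.Icc_union_Ioc_eq_Icc hε₀ hε₁,
    lintegral_union measurableSet_Ioc
      ((Set.Iic_disjoint_Ioi le_rfl).mono Set.Icc_subset_Iic_self Set.Ioc_subset_Ioi_self)]
  have hlow : ∫⁻ x in Set.Icc 0 ε, altLaw ε (Set.Iio x) * altLaw ε (Set.Iio x)
      = ∫⁻ x in Set.Icc 0 ε, ENNReal.ofReal (x ^ 2) := by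
    refine setLIntegral_congr_fun measurableSet_Icc fun x hx ↦ ?_
    rw [altLaw_Iio hε₀ hε₁, if_pos hx.2, ← ENNReal.ofReal_mul hx.1, sq]
  have hhigh : ∫⁻ x in Set.Ioc ε 1, altLaw ε (Set.Iio x) * altLaw ε (Set.Iio x)
      = ENNReal.ofReal (1 - ε) := by
    rw [setLIntegral_congr_fun measurableSet_Ioc fun x hx ↦ by
      rw [altLaw_Iio hε₀ hε₁, if_neg (not_le.mpr hx.1), one_mul],
      setLIntegral_one, Real.volume_Ioc]
  rw [hlow, hhigh, setLIntegral_Icc_ofReal hε₀ (by fun_prop) fun x _ ↦ sq_nonneg _,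
    integral_pow, ← ENNReal.ofReal_add (by simp; positivity) (by linarith)]
  ring_nf

end Integrals

/-- There exist FDR procedures violating monotonicity of the FDR: with `m = 3`,
one null `p₁ ~ U[0,1]` and two i.i.d. alternatives with law
`ε·U[0,ε] + (1-ε)·δ_ε` (which is stochastically smaller than `U[0,1]`), letting
`P⁽¹⁾` reject only the smallest p-value and `P⁽²⁾` the two smallest, we have
`FDR⁽¹⁾ = Pr(p₁ < min(p₂,p₃)) = ε + O(ε²)` and
`FDR⁽²⁾ = (1 - Pr(p₁ > max(p₂,p₃)))/2 = ε/2 + O(ε³)`, so that for all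
sufficiently small `ε > 0`, `FDR⁽¹⁾ > FDR⁽²⁾`. -/
theorem fdr_violation_example :
    ∃ C > (0:ℝ), ∃ ε₀ > (0:ℝ), ∀ ε : ℝ, 0 < ε → ε < ε₀ →
      -- the alternative law is stochastically smaller than `U[0,1]`
      (∀ x ∈ Set.Icc (0:ℝ) 1, ENNReal.ofReal x ≤ altLaw ε (Set.Iic x)) ∧
      ∀ (Ω : Type) [MeasurableSpace Ω] (μ : Measure Ω) [IsProbabilityMeasure μ]
        (p : Fin 3 → Ω → ℝ), (∀ i, Measurable (p i)) →
        iIndepFun p μ →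
        Measure.map (p 0) μ = volume.restrict (Set.Icc (0:ℝ) 1) →
        Measure.map (p 1) μ = altLaw ε →
        Measure.map (p 2) μ = altLaw ε →
        |(μ {ω | p 0 ω < min (p 1 ω) (p 2 ω)}).toReal - ε| ≤ C * ε ^ 2 ∧
        |(1 - (μ {ω | max (p 1 ω) (p 2 ω) < p 0 ω}).toReal) / 2 - ε / 2| ≤ C * ε ^ 3 ∧
        (μ {ω | p 0 ω < min (p 1 ω) (p 2 ω)}).toReal >
          (1 - (μ {ω | max (p 1 ω) (p 2 ω) < p 0 ω}).toReal) / 2 := by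
  refine ⟨1, one_pos, 1, one_pos, fun ε hε₀ hε₁ ↦
    ⟨fun x hx ↦ ofReal_le_altLaw_Iic hε₀.le hε₁.le hx.2, ?_⟩⟩
  intro Ω _ μ _ p hp hind hlaw₀ hlaw₁ hlaw₂
  have hXYZ : IndepFun (p 0) (fun ω ↦ (p 1 ω, p 2 ω)) μ :=
    (hind.indepFun_prodMk hp 1 2 0 (by decide) (by decide)).symm
  have hYZ : IndepFun (p 1) (p 2) μ := hind.indepFun (by decide)
  have hmin : μ {ω | p 0 ω < min (p 1 ω) (p 2 ω)} = ENNReal.ofReal (ε - ε ^ 2 + ε ^ 3 / 3) := by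
    rw [measure_lt_min_eq_lintegral (hp 0) (hp 1) (hp 2) hXYZ hYZ, hlaw₀, hlaw₁, hlaw₂,
      lintegral_altLaw_Ioi_sq hε₀.le hε₁.le]
  have hmax : μ {ω | max (p 1 ω) (p 2 ω) < p 0 ω} = ENNReal.ofReal (1 - ε + ε ^ 3 / 3) := by
    rw [measure_max_lt_eq_lintegral (hp 0) (hp 1) (hp 2) hXYZ hYZ, hlaw₀, hlaw₁, hlaw₂,
      lintegral_altLaw_Iio_sq hε₀.le hε₁.le]
  have hε₃ : 0 < ε ^ 3 := pow_pos hε₀ 3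
  rw [hmin, hmax, ENNReal.toReal_ofReal (by nlinarith), ENNReal.toReal_ofReal (by linarith)]
  refine ⟨abs_le.mpr ⟨by nlinarith, by nlinarith⟩, abs_le.mpr ⟨by linarith, by linarith⟩, ?_⟩
  nlinarith [mul_pos hε₀ (pow_pos (sub_pos.mpr hε₁) 2)]
end

section
/- Let p_1, ..., p_m be independent p-values with the first m_0 i.i.d. U[0,1]. The step-up BH procedure with constants α_i = iq/m satisfies FDR = E[V/max(R,1)] ≤ (m_0/m) q. -/
/-!
Write `V / max(R, 1)` as a sum over the true nulls `i` of `1{p_i ≤ γ_R} / max(R, 1)`, where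
`γ_k = k q / m`. Let `R_i` be the number of rejections after replacing `p_i` by `γ_0 = 0`: it is a
function of the other p-values, hence independent of `p_i`, and it equals `R` as soon as `p_i` is
rejected, because moving a rejected p-value below its threshold changes none of the step-up
conditions at levels `≥ R`. Hence the `i`-th term has expectation
`∑_k P(p_i ≤ k q / m) P(R_i = k) / k ≤ (q / m) ∑_k P(R_i = k) ≤ q / m`,
and there are `m₀` true nulls.
-/

open MeasureTheory ProbabilityTheory Finset
open scoped Classical

open Function

section StepUp

variable {m : ℕ} {γ : ℕ → ℝ}

lemma stepUpRejections_mem (x : Fin m → ℝ) :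
    stepUpRejections m γ x ∈ (range (m + 1)).filter (fun k => k ≤ #{i | x i ≤ γ k}) := by
  obtain ⟨k, hk, hsup⟩ :=
    exists_mem_eq_sup ((range (m + 1)).filter (fun k => k ≤ #{i | x i ≤ γ k})) ⟨0, by simp⟩ id
  rw [stepUpRejections, hsup]
  exact hk

lemma stepUpRejections_le (x : Fin m → ℝ) : stepUpRejections m γ x ≤ m :=
  Nat.le_of_lt_succ (mem_range.mp (mem_filter.mp (stepUpRejections_mem x)).1)

lemma stepUpRejections_le_card (x : Fin m → ℝ) :
    stepUpRejections m γ x ≤ #{i | x i ≤ γ (stepUpRejections m γ x)} :=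
  (mem_filter.mp (stepUpRejections_mem x)).2

lemma le_stepUpRejections {x : Fin m → ℝ} {k : ℕ} (hkm : k ≤ m) (hk : k ≤ #{i | x i ≤ γ k}) :
    k ≤ stepUpRejections m γ x :=
  le_sup (f := id) (s := (range (m + 1)).filter (fun k => k ≤ #{i | x i ≤ γ k}))
    (mem_filter.mpr ⟨mem_range.mpr (Nat.lt_succ_of_le hkm), hk⟩)

lemma stepUpRejections_update (hγ : Monotone γ) {x : Fin m → ℝ} {i : Fin m} {t : ℝ}
    (hx : x i ≤ γ (stepUpRejections m γ x)) (ht : t ≤ γ (stepUpRejections m γ x)) :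
    stepUpRejections m γ (update x i t) = stepUpRejections m γ x := by
  set k := stepUpRejections m γ x
  have hcount : ∀ j, k ≤ j → #{l | update x i t l ≤ γ j} = #{l | x l ≤ γ j} := by
    intro j hj
    congr 1
    ext l
    rcases eq_or_ne l i with rfl | hl
    · simp only [mem_filter, mem_univ, true_and, update_self]
      exact ⟨fun _ => hx.trans (hγ hj), fun _ => ht.trans (hγ hj)⟩
    · simp only [mem_filter, mem_univ, true_and, update_of_ne hl]
  refine le_antisymm ?_ (le_stepUpRejections (stepUpRejections_le x) ?_)
  · by_contra! hlt
    have := stepUpRejections_le_card (γ := γ) (update x i t)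
    rw [hcount _ hlt.le] at this
    exact absurd (le_stepUpRejections (stepUpRejections_le _) this) hlt.not_ge
  · rw [hcount k le_rfl]
    exact stepUpRejections_le_card x

lemma ite_stepUpRejections_eq_update (hγ : Monotone γ) (x : Fin m → ℝ) (i : Fin m) (g : ℕ → ℝ) :
    (if x i ≤ γ (stepUpRejections m γ x) then g (stepUpRejections m γ x) else 0) =
      if x i ≤ γ (stepUpRejections m γ (update x i (γ 0)))
        then g (stepUpRejections m γ (update x i (γ 0))) else 0 := by
  by_cases hx : x i ≤ γ (stepUpRejections m γ x)
  · rw [stepUpRejections_update hγ hx (hγ (Nat.zero_le _))]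
  · have hy : ¬ x i ≤ γ (stepUpRejections m γ (update x i (γ 0))) := by
      intro hy
      have := stepUpRejections_update hγ (x := update x i (γ 0)) (i := i) (t := x i)
        (by rw [update_self]; exact hγ (Nat.zero_le _)) hy
      rw [update_idem, update_eq_self] at this
      exact hx (this ▸ hy)
    rw [if_neg hx, if_neg hy]

end StepUp

lemma measurable_stepUpRejections_s19 (m : ℕ) (γ : ℕ → ℝ) : Measurable (stepUpRejections m γ) := by
  have hcard : ∀ k, Measurable fun x : Fin m → ℝ => #{i | x i ≤ γ k} := by
    intro k
    simp_rw [card_filter]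
    exact measurable_sum _ fun i _ =>
      Measurable.ite (measurableSet_le (measurable_pi_apply i) measurable_const)
        measurable_const measurable_const
  have heq : stepUpRejections m γ = fun x => (range (m + 1)).sup' nonempty_range_add_one
      fun k => if k ≤ #{i | x i ≤ γ k} then k else 0 := by
    ext x
    rw [stepUpRejections, sup'_eq_sup, sup_ite]
    simp only [not_le, Finset.sup_le_iff, mem_filter, mem_range, Order.lt_add_one_iff, zero_le,
      implies_true, sup_of_le_left]
    rfl
  rw [heq]
  exact measurable_range_sup'' fun k _ =>
    Measurable.ite (measurableSet_le measurable_const (hcard k)) measurable_const measurable_const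

section Probability

variable {Ω : Type*} [MeasurableSpace Ω] {μ : Measure Ω}

lemma measure_preimage_Iic_le_of_map_eq_uniform {X : Ω → ℝ} (hX : Measurable X)
    (hunif : μ.map X = volume.restrict (Set.Icc 0 1)) (t : ℝ) :
    μ (X ⁻¹' Set.Iic t) ≤ ENNReal.ofReal t := by
  rw [← Measure.map_apply hX measurableSet_Iic, hunif, Measure.restrict_apply measurableSet_Iic]
  calc volume (Set.Iic t ∩ Set.Icc 0 1) ≤ volume (Set.Icc 0 t) :=
        measure_mono fun y hy => ⟨hy.2.1, hy.1⟩
    _ = ENNReal.ofReal t := by rw [Real.volume_Icc, sub_zero]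

lemma ProbabilityTheory.iIndepFun.indepFun_comp_update {ι β δ : Type*} [Fintype ι] [DecidableEq ι]
    [MeasurableSpace β] [MeasurableSpace δ] {f : ι → Ω → β} (hf : iIndepFun f μ)
    (hmeas : ∀ i, Measurable (f i)) (i : ι) (b : β) {g : (ι → β) → δ} (hg : Measurable g) :
    IndepFun (f i) (fun ω => g (update (fun j => f j ω) i b)) μ := by
  have hST : Disjoint ({i} : Finset ι) (univ.erase i) := by simp
  have hg' : Measurable fun y : {j // j ∈ univ.erase i} → β =>
      g fun j => if hj : j ∈ univ.erase i then y ⟨j, hj⟩ else b := by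
    refine hg.comp (measurable_pi_lambda _ fun j => ?_)
    by_cases hj : j ∈ univ.erase i
    · simpa only [dif_pos hj] using measurable_pi_apply _
    · simpa only [dif_neg hj] using measurable_const
  convert (hf.indepFun_finset {i} (univ.erase i) hST hmeas).comp
    (measurable_pi_apply ⟨i, mem_singleton_self i⟩) hg' using 1
  · rfl
  · refine funext fun ω => congrArg g (funext fun j => ?_)
    by_cases hj : j = i <;> simp [hj]

end Probability

section SuperUniform

variable {Ω : Type*} {X : Ω → ℝ} {Y : Ω → ℕ} {c : ℝ} {s : Finset ℕ}

lemma ite_le_mul_eq_sum_indicator (hYs : ∀ ω, Y ω ∈ s) (g : ℕ → ℝ) :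
    (fun ω => if X ω ≤ Y ω * c then g (Y ω) else 0) =
      fun ω => ∑ k ∈ s, (X ⁻¹' Set.Iic (k * c) ∩ Y ⁻¹' {k}).indicator (fun _ => g k) ω := by
  ext ω
  simp only [Set.indicator_apply, Set.mem_inter_iff, Set.mem_preimage, Set.mem_Iic,
    Set.mem_singleton_iff, and_comm (a := X ω ≤ _), ite_and]
  rw [sum_ite_eq, if_pos (hYs ω)]

variable [MeasurableSpace Ω] {μ : Measure Ω}

lemma integrable_ite_le_mul [IsFiniteMeasure μ] (hX : Measurable X) (hY : Measurable Y)
    (hYs : ∀ ω, Y ω ∈ s) (g : ℕ → ℝ) :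
    Integrable (fun ω => if X ω ≤ Y ω * c then g (Y ω) else 0) μ := by
  rw [ite_le_mul_eq_sum_indicator hYs]
  exact integrable_finsetSum _ fun k _ => (integrable_const (g k)).indicator
    ((hX measurableSet_Iic).inter (hY (measurableSet_singleton k)))

lemma integral_ite_le_mul_inv_max_le [IsProbabilityMeasure μ] (hX : Measurable X)
    (hY : Measurable Y) (hXY : IndepFun X Y μ)
    (hunif : ∀ t, μ (X ⁻¹' Set.Iic t) ≤ ENNReal.ofReal t) (hc : 0 ≤ c) (hYs : ∀ ω, Y ω ∈ s) :
    ∫ ω, (if X ω ≤ Y ω * c then (max (Y ω : ℝ) 1)⁻¹ else 0) ∂μ ≤ c := by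
  have hA (k : ℕ) : MeasurableSet (X ⁻¹' Set.Iic (k * c) ∩ Y ⁻¹' {k}) :=
    (hX measurableSet_Iic).inter (hY (measurableSet_singleton k))
  have hterm (k : ℕ) : μ.real (X ⁻¹' Set.Iic (k * c) ∩ Y ⁻¹' {k}) * (max (k : ℝ) 1)⁻¹ ≤
      c * μ.real (Y ⁻¹' {k}) := by
    have hXk : μ.real (X ⁻¹' Set.Iic (k * c)) ≤ k * c :=
      ENNReal.toReal_le_of_le_ofReal (by positivity) (hunif _)
    have hk : (k : ℝ) * (max (k : ℝ) 1)⁻¹ ≤ 1 := by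
      rw [← div_eq_mul_inv]
      exact div_le_one_of_le₀ (le_max_left _ _) (by positivity)
    calc μ.real (X ⁻¹' Set.Iic (k * c) ∩ Y ⁻¹' {k}) * (max (k : ℝ) 1)⁻¹
        = μ.real (X ⁻¹' Set.Iic (k * c)) * μ.real (Y ⁻¹' {k}) * (max (k : ℝ) 1)⁻¹ := by
          simp only [Measure.real, hXY.measure_inter_preimage_eq_mul _ _ measurableSet_Iic
            (measurableSet_singleton k), ENNReal.toReal_mul]
      _ ≤ k * c * μ.real (Y ⁻¹' {k}) * (max (k : ℝ) 1)⁻¹ := by gcongr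
      _ = (k * (max (k : ℝ) 1)⁻¹) * (c * μ.real (Y ⁻¹' {k})) := by ring
      _ ≤ c * μ.real (Y ⁻¹' {k}) := mul_le_of_le_one_left (by positivity) hk
  calc ∫ ω, (if X ω ≤ Y ω * c then (max (Y ω : ℝ) 1)⁻¹ else 0) ∂μ
      = ∑ k ∈ s, μ.real (X ⁻¹' Set.Iic (k * c) ∩ Y ⁻¹' {k}) * (max (k : ℝ) 1)⁻¹ := by
        rw [ite_le_mul_eq_sum_indicator hYs (fun k => (max (k : ℝ) 1)⁻¹),
          integral_finsetSum _ fun k _ => (integrable_const _).indicator (hA k)]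
        exact sum_congr rfl fun k _ => by rw [integral_indicator_const _ (hA k), smul_eq_mul]
    _ ≤ ∑ k ∈ s, c * μ.real (Y ⁻¹' {k}) := sum_le_sum fun k _ => hterm k
    _ = c * μ.real (Y ⁻¹' s) := by
        rw [← mul_sum,
          sum_measureReal_preimage_singleton s fun k _ => hY (measurableSet_singleton k)]
    _ ≤ c := mul_le_of_le_one_right hc measureReal_le_one

end SuperUniform

theorem BH95_fdr_control_general {Ω : Type*} [MeasurableSpace Ω]
    (μ : Measure Ω) [IsProbabilityMeasure μ] (m m₀ : ℕ)
    (q : ℝ) (hq0 : 0 < q)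
    (p : Fin m → Ω → ℝ) (hmeas : ∀ i, Measurable (p i))
    (hindep : iIndepFun p μ)
    (hnull : ∀ i : Fin m, (i : ℕ) < m₀ →
      Measure.map (p i) μ = volume.restrict (Set.Icc (0:ℝ) 1))
    (R : Ω → ℕ) (hR : ∀ ω, R ω = stepUpRejections m (fun k => k * q / m) (fun i => p i ω))
    (V : Ω → ℕ) (hV : ∀ ω, V ω = (Finset.univ.filter
      (fun i : Fin m => (i : ℕ) < m₀ ∧ p i ω ≤ (R ω) * q / m)).card) :
    ∫ ω, (V ω : ℝ) / max (R ω) 1 ∂μ ≤ ((m₀ : ℝ) / m) * q := by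
  set γ : ℕ → ℝ := fun k => k * q / m
  have hγ : Monotone γ := fun a b hab => by simp only [γ]; gcongr
  set nulls : Finset (Fin m) := univ.filter fun i => (i : ℕ) < m₀
  set Q : Fin m → Ω → ℕ := fun i ω => stepUpRejections m γ (update (fun j => p j ω) i (γ 0))
  have hQ_meas (i : Fin m) : Measurable (Q i) :=
    (measurable_stepUpRejections_s19 m γ).comp
      (measurable_update_left.comp (measurable_pi_lambda _ hmeas))
  have hQ_mem (i : Fin m) (ω : Ω) : Q i ω ∈ range (m + 1) :=
    mem_range.mpr (Nat.lt_succ_of_le (stepUpRejections_le _))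
  have hfdp (ω : Ω) : (V ω : ℝ) / max (R ω) 1 = ∑ i ∈ nulls,
      if p i ω ≤ Q i ω * (q / m) then (max (Q i ω : ℝ) 1)⁻¹ else 0 := by
    rw [hV, div_eq_mul_inv, ← filter_filter, ← nsmul_eq_mul, ← sum_const, sum_filter]
    refine sum_congr rfl fun i _ => ?_
    rw [hR, ← mul_div_assoc, Nat.cast_max, Nat.cast_one]
    exact ite_stepUpRejections_eq_update hγ (fun j => p j ω) i (fun k => (max (k : ℝ) 1)⁻¹)
  calc ∫ ω, (V ω : ℝ) / max (R ω) 1 ∂μ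
      = ∑ i ∈ nulls,
          ∫ ω, (if p i ω ≤ Q i ω * (q / m) then (max (Q i ω : ℝ) 1)⁻¹ else 0) ∂μ := by
        simp_rw [hfdp]
        exact integral_finsetSum _ fun i _ =>
          integrable_ite_le_mul (hmeas i) (hQ_meas i) (hQ_mem i) fun k => (max (k : ℝ) 1)⁻¹
    _ ≤ ∑ i ∈ nulls, q / m := sum_le_sum fun i hi =>
        integral_ite_le_mul_inv_max_le (hmeas i) (hQ_meas i)
          (hindep.indepFun_comp_update hmeas i (γ 0) (measurable_stepUpRejections_s19 m γ))
          (measure_preimage_Iic_le_of_map_eq_uniform (hmeas i) (hnull i (mem_filter.mp hi).2))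
          (by positivity) (hQ_mem i)
    _ ≤ m₀ * (q / m) := by
        rw [sum_const, nsmul_eq_mul, Fin.card_filter_val_lt]
        gcongr
        exact_mod_cast min_le_right m m₀
    _ = m₀ / m * q := by ring

/-- Benjamini–Hochberg 1995: for independent p-values whose first `m₀` (the
true nulls) are i.i.d. `U[0,1]`, the step-up procedure with constants
`α_i = i*q/m` satisfies `FDR = E[V / max(R,1)] ≤ (m₀/m) * q`. -/
theorem BH95_fdr_control {Ω : Type*} [MeasurableSpace Ω]
    (μ : Measure Ω) [IsProbabilityMeasure μ] (m m₀ : ℕ) (hm : m₀ ≤ m)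
    (q : ℝ) (hq0 : 0 < q) (hq1 : q ≤ 1)
    (p : Fin m → Ω → ℝ) (hmeas : ∀ i, Measurable (p i))
    (hindep : iIndepFun p μ)
    (hnull : ∀ i : Fin m, (i : ℕ) < m₀ →
      Measure.map (p i) μ = volume.restrict (Set.Icc (0:ℝ) 1))
    (R : Ω → ℕ) (hR : ∀ ω, R ω = stepUpRejections m (fun k => k * q / m) (fun i => p i ω))
    (V : Ω → ℕ) (hV : ∀ ω, V ω = (Finset.univ.filter
      (fun i : Fin m => (i : ℕ) < m₀ ∧ p i ω ≤ (R ω) * q / m)).card) :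
    ∫ ω, (V ω : ℝ) / max (R ω) 1 ∂μ ≤ ((m₀ : ℝ) / m) * q :=
  BH95_fdr_control_general μ m m₀ q hq0 p hmeas hindep hnull R hR V hV
end
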